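/- arXiv:2408.10346 — 8 statements merged into one kernel-verified Lean document; each statement's English description precedes it below -/
import Mathlib

section
/- If a Condorcet consistent tournament rule on n ≥ 3 agents is monotone and 2-NM_λ-α (i.e., for all pairs i ≠ j and {i,j}-adjacent tournaments T, T', r_i(T') + r_j(T') ≤ r_i(T) + r_j(T) + λ·max{r_i(T) − r_i(T'), r_j(T) − r_j(T')} + α), then λ ≥ 1 − 3α. -/
open Classical Finset

structure Tournament (n : ℕ) where
  beats : Fin n → Fin n → Prop
  irrefl : ∀ i, ¬ beats i i
  total : ∀ i j, i ≠ j → (beats i j ↔ ¬ beats j i)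

/-- `r` maps each tournament to a probability distribution over the agents. -/
def IsProbRule {n : ℕ} (r : Tournament n → Fin n → ℝ) : Prop :=
  ∀ T, (∀ i, 0 ≤ r T i) ∧ ∑ i, r T i = 1

/-- `T` and `T'` agree on all matches except possibly the one between `i` and `j`. -/
def Adjacent {n : ℕ} (i j : Fin n) (T T' : Tournament n) : Prop :=
  ∀ a b, ¬((a = i ∧ b = j) ∨ (a = j ∧ b = i)) → (T.beats a b ↔ T'.beats a b)

def CondorcetConsistent {n : ℕ} (r : Tournament n → Fin n → ℝ) : Prop :=
  ∀ T i, (∀ j, j ≠ i → T.beats i j) → r T i = 1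

def MonotoneRule {n : ℕ} (r : Tournament n → Fin n → ℝ) : Prop :=
  ∀ i j (T T' : Tournament n), i ≠ j → Adjacent i j T T' → T ≠ T' →
    T.beats i j → r T' i ≤ r T i

/-- 2-NM_λ-α. -/
def TwoNM {n : ℕ} (lam alpha : ℝ) (r : Tournament n → Fin n → ℝ) : Prop :=
  ∀ i j (T T' : Tournament n), i ≠ j → Adjacent i j T T' → T ≠ T' →
    r T' i + r T' j ≤
      r T i + r T j + lam * max (r T i - r T' i) (r T j - r T' j) + alpha

/-! Take a tournament containing a 3-cycle `a → b → c → a` in which each of `a, b, c` beats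
everybody except its predecessor on the cycle. Reversing the one loss of an agent makes it the
Condorcet winner; the pair of that match then loses at most the loser's probability, so by 2-NM
it already holds nearly everything: `1 ≤ r a + r c + λ r c + α` and its two rotations. Summing,
`3 ≤ 2 s + λ s + 3α` with `s = r a + r b + r c ≤ 1`, hence `λ ≥ 1 - 3α`. -/

namespace Tournament

variable {n : ℕ}

def flip (T : Tournament n) (i j : Fin n) : Tournament n where
  beats a b := if (a = i ∧ b = j) ∨ (a = j ∧ b = i) then T.beats b a else T.beats a b
  irrefl a := by split_ifs <;> exact T.irrefl a
  total a b hab := by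
    by_cases h : (a = i ∧ b = j) ∨ (a = j ∧ b = i)
    · have h' : (b = i ∧ a = j) ∨ (b = j ∧ a = i) := by tauto
      simp only [h, h', if_true]
      exact T.total b a hab.symm
    · have h' : ¬((b = i ∧ a = j) ∨ (b = j ∧ a = i)) := by tauto
      simp only [h, h', if_false]
      exact T.total a b hab

theorem adjacent_flip (T : Tournament n) (i j : Fin n) : Adjacent i j T (T.flip i j) := by
  intro a b hab
  simp only [flip, hab, if_false]

theorem flip_beats_left (T : Tournament n) (i j : Fin n) :
    (T.flip i j).beats i j ↔ T.beats j i := by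
  simp only [flip, and_true, true_or, if_true]

theorem ne_flip (T : Tournament n) {i j : Fin n} (hij : i ≠ j) : T ≠ T.flip i j := by
  intro h
  have hflip := T.flip_beats_left i j
  rw [← h] at hflip
  have := T.total i j hij
  tauto

def LosesOnlyTo (T : Tournament n) (i j : Fin n) : Prop :=
  T.beats j i ∧ ∀ k, k ≠ i → k ≠ j → T.beats i k

theorem LosesOnlyTo.ne {T : Tournament n} {i j : Fin n} (h : T.LosesOnlyTo i j) : i ≠ j := by
  rintro rfl
  exact T.irrefl i h.1

theorem LosesOnlyTo.beats_flip {T : Tournament n} {i j : Fin n} (h : T.LosesOnlyTo i j)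
    (k : Fin n) (hk : k ≠ i) : (T.flip i j).beats i k := by
  by_cases hkj : k = j
  · subst hkj
    exact (T.flip_beats_left i k).2 h.1
  · have hpair : ¬((i = i ∧ k = j) ∨ (i = j ∧ k = i)) := by tauto
    change ite _ _ _
    rw [if_neg hpair]
    exact h.2 k hk hkj

def byIndex (n : ℕ) : Tournament n where
  beats a b := a < b
  irrefl a := lt_irrefl a
  total _ _ hab := ⟨lt_asymm, fun h => lt_of_le_of_ne (not_lt.1 h) hab⟩

theorem exists_losesOnlyTo_cycle (hn : 3 ≤ n) :
    ∃ (T : Tournament n) (a b c : Fin n),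
      T.LosesOnlyTo a c ∧ T.LosesOnlyTo b a ∧ T.LosesOnlyTo c b := by
  -- reversing the match 0–2 of `byIndex n` creates the cycle 0 → 1 → 2 → 0
  refine ⟨(byIndex n).flip ⟨0, by omega⟩ ⟨2, by omega⟩, ⟨0, by omega⟩, ⟨1, by omega⟩,
    ⟨2, by omega⟩, ?_, ?_, ?_⟩ <;>
  refine ⟨?_, fun k hk₁ hk₂ => ?_⟩
  all_goals
    simp only [flip, byIndex, ne_eq, Fin.ext_iff, Fin.lt_def] at *
    split_ifs <;> simp_all <;> omega

end Tournament

section Rule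

variable {n : ℕ} {r : Tournament n → Fin n → ℝ}

theorem IsProbRule.le_one (hr : IsProbRule r) (T : Tournament n) (i : Fin n) : r T i ≤ 1 :=
  (single_le_sum (fun j _ => (hr T).1 j) (mem_univ i)).trans (hr T).2.le

theorem IsProbRule.add_add_le_one (hr : IsProbRule r) (T : Tournament n) {a b c : Fin n}
    (hab : a ≠ b) (hac : a ≠ c) (hbc : b ≠ c) : r T a + r T b + r T c ≤ 1 :=
  calc r T a + r T b + r T c = ∑ i ∈ {a, b, c}, r T i := by
        rw [sum_insert (by simp [hab, hac]), sum_pair hbc, add_assoc]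
    _ ≤ ∑ i, r T i := sum_le_sum_of_subset_of_nonneg (subset_univ _) fun i _ _ => (hr T).1 i
    _ = 1 := (hr T).2

variable {lam alpha : ℝ}

theorem TwoNM.one_le_of_losesOnlyTo (hnm : TwoNM lam alpha r) (hr : IsProbRule r)
    (hcc : CondorcetConsistent r) (hlam : 0 ≤ lam) {T : Tournament n} {i j : Fin n}
    (h : T.LosesOnlyTo i j) : 1 ≤ r T i + r T j + lam * r T j + alpha := by
  set T' := T.flip i j
  have hwin : r T' i = 1 := hcc T' i h.beats_flip
  have hmax : max (r T i - r T' i) (r T j - r T' j) ≤ r T j :=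
    max_le (by linarith [hr.le_one T i, (hr T).1 j]) (by linarith [(hr T').1 j])
  have hnm_ij := hnm i j T T' h.ne (T.adjacent_flip i j) (T.ne_flip h.ne)
  linarith [mul_le_mul_of_nonneg_left hmax hlam, (hr T').1 j]

theorem TwoNM.one_sub_three_mul_le_of_cycle (hnm : TwoNM lam alpha r) (hr : IsProbRule r)
    (hcc : CondorcetConsistent r) (hlam : 0 ≤ lam) {T : Tournament n} {a b c : Fin n}
    (hac : T.LosesOnlyTo a c) (hba : T.LosesOnlyTo b a) (hcb : T.LosesOnlyTo c b) :
    1 - 3 * alpha ≤ lam := by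
  have hsum := hr.add_add_le_one T hba.ne.symm hac.ne hcb.ne.symm
  linarith [mul_le_mul_of_nonneg_left hsum hlam, hnm.one_le_of_losesOnlyTo hr hcc hlam hac,
    hnm.one_le_of_losesOnlyTo hr hcc hlam hba, hnm.one_le_of_losesOnlyTo hr hcc hlam hcb]

end Rule

theorem stmt0_general {n : ℕ} (hn : 3 ≤ n) (r : Tournament n → Fin n → ℝ)
    (hr : IsProbRule r) (lam alpha : ℝ) (hlam : 0 ≤ lam)
    (hcc : CondorcetConsistent r)
    (hnm : TwoNM lam alpha r) :
    1 - 3 * alpha ≤ lam := by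
  obtain ⟨T, a, b, c, hac, hba, hcb⟩ := Tournament.exists_losesOnlyTo_cycle hn
  exact hnm.one_sub_three_mul_le_of_cycle hr hcc hlam hac hba hcb

theorem stmt0 {n : ℕ} (hn : 3 ≤ n) (r : Tournament n → Fin n → ℝ)
    (hr : IsProbRule r) (lam alpha : ℝ) (hlam : 0 ≤ lam) (halpha : 0 ≤ alpha)
    (hcc : CondorcetConsistent r) (hmono : MonotoneRule r)
    (hnm : TwoNM lam alpha r) :
    1 - 3 * alpha ≤ lam :=
  stmt0_general hn r hr lam alpha hlam hcc hnm
end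

section
/- The top cycle of a tournament exists and is unique: for every tournament on a finite nonempty set of agents, there is exactly one minimal nonempty subset S of agents such that every agent in S beats every agent outside S. -/
/-!
Two dominant sets are comparable, since an agent of `S \ S'` and one of `S' \ S` would beat each
other. So the dominant sets form a chain; the whole set of agents is dominant, hence a minimal
dominant set exists, and in a chain it is the least one.
-/

open Finset

/-- A tournament on an arbitrary finite set of agents. -/
structure Tourney (A : Type*) where
  beats : A → A → Prop
  irrefl : ∀ i, ¬ beats i i
  total : ∀ i j, i ≠ j → (beats i j ↔ ¬ beats j i)

namespace Tourney

variable {A : Type*} (T : Tourney A)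

theorem asymm {i j : A} (h : T.beats i j) : ¬ T.beats j i :=
  (T.total i j fun e => T.irrefl j (e ▸ h)).mp h

def IsDominant (S : Finset A) : Prop :=
  ∀ i ∈ S, ∀ j ∉ S, T.beats i j

variable {T}

theorem IsDominant.subset_or_subset {S S' : Finset A} (hS : T.IsDominant S)
    (hS' : T.IsDominant S') : S ⊆ S' ∨ S' ⊆ S := by
  rw [or_iff_not_imp_left, not_subset]
  rintro ⟨i, hiS, hiS'⟩ j hjS'
  by_contra hjS
  exact T.asymm (hS i hiS j hjS) (hS' j hjS' i hiS')

theorem isDominant_univ [Fintype A] : T.IsDominant univ :=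
  fun _ _ j hj => absurd (mem_univ j) hj

end Tourney

theorem stmt6_general {A : Type*} [Fintype A] [Nonempty A] (T : Tourney A) :
    ∃! S : Finset A,
      (S.Nonempty ∧ ∀ i ∈ S, ∀ j ∉ S, T.beats i j) ∧
        ∀ S' : Finset A, (S'.Nonempty ∧ ∀ i ∈ S', ∀ j ∉ S', T.beats i j) → ¬ S' ⊂ S := by
  obtain ⟨S, hS, hmin⟩ := wellFounded_lt.has_min {S : Finset A | S.Nonempty ∧ T.IsDominant S}
    ⟨univ, univ_nonempty, Tourney.isDominant_univ⟩
  refine ⟨S, ⟨hS, hmin⟩, fun S' ⟨hS', hS'min⟩ => ?_⟩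
  rcases Tourney.IsDominant.subset_or_subset hS'.2 hS.2 with h | h
  · exact eq_of_subset_of_not_ssubset h (hmin S' hS')
  · exact (eq_of_subset_of_not_ssubset h (hS'min S hS)).symm

/-- Existence and uniqueness of the top cycle: there is exactly one minimal
nonempty dominant subset of agents. -/
theorem stmt6 {A : Type*} [Fintype A] [DecidableEq A] [Nonempty A] (T : Tourney A) :
    ∃! S : Finset A,
      (S.Nonempty ∧ ∀ i ∈ S, ∀ j ∉ S, T.beats i j) ∧
        ∀ S' : Finset A, (S'.Nonempty ∧ ∀ i ∈ S', ∀ j ∉ S', T.beats i j) → ¬ S' ⊂ S :=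
  stmt6_general T
end

section
/- Let r be a 2-NM_λ tournament rule for some λ > 0. Then r is monotone if and only if for all i ≠ j and all {i,j}-adjacent tournaments T ≠ T' with j beating i in T, we have r_i(T') − r_i(T) ≤ (λ + 1)·(r_j(T) − r_j(T')). -/
open Classical Finset

lemma Tournament.ext_beats {n : ℕ} {T T' : Tournament n} (h : T.beats = T'.beats) : T = T' := by
  cases T
  cases T'
  cases h
  rfl

namespace Adjacent

variable {n : ℕ} {i j : Fin n} {T T' : Tournament n}

lemma swap (h : Adjacent i j T T') : Adjacent j i T T' :=
  fun a b hab => h a b (by tauto)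

lemma symm (h : Adjacent i j T T') : Adjacent i j T' T :=
  fun a b hab => (h a b hab).symm

lemma beats_flip (hij : i ≠ j) (h : Adjacent i j T T') (hne : T ≠ T') (hji : T.beats j i) :
    T'.beats i j := by
  by_contra hij'
  have hji' : T'.beats j i := (T'.total j i hij.symm).mpr hij'
  have hij_not : ¬ T.beats i j := (T.total i j hij).not_left.mpr hji
  refine hne (Tournament.ext_beats (funext fun a => funext fun b => propext ?_))
  by_cases hab : (a = i ∧ b = j) ∨ (a = j ∧ b = i)
  · rcases hab with ⟨rfl, rfl⟩ | ⟨rfl, rfl⟩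
    · exact iff_of_false hij_not hij'
    · exact iff_of_true hji hji'
  · exact h a b hab

end Adjacent

/-- When `j` beats `i` in `T`, flipping that match in `i`'s favour raises `i`'s probability by at
most `c` times what it costs `j`. -/
def IsGainBounded {n : ℕ} (c : ℝ) (r : Tournament n → Fin n → ℝ) : Prop :=
  ∀ i j (T T' : Tournament n), i ≠ j → Adjacent i j T T' → T ≠ T' →
    T.beats j i → r T' i - r T i ≤ c * (r T j - r T' j)

lemma le_add_one_mul_of_sub_le_mul_max {lam a b : ℝ} (hlam : 0 ≤ lam) (ha : 0 ≤ a)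
    (h : a - b ≤ lam * max (-a) b) : a ≤ (lam + 1) * b := by
  rcases max_cases (-a) b with ⟨hmax, -⟩ | ⟨hmax, -⟩ <;> rw [hmax] at h
  · have hb : 0 ≤ b := by nlinarith
    nlinarith
  · linarith

lemma nonneg_of_le_mul_of_le_mul {c x y : ℝ} (hc : 1 < c) (hyx : y ≤ c * x) (hxy : x ≤ c * y) :
    0 ≤ x := by
  by_contra! hx
  have hy : y < 0 := hyx.trans_lt (by nlinarith)
  nlinarith

section

variable {n : ℕ} {r : Tournament n → Fin n → ℝ}

lemma TwoNM.isGainBounded_of_monotoneRule {lam : ℝ} (hlam : 0 ≤ lam) (hnm : TwoNM lam 0 r)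
    (hmono : MonotoneRule r) : IsGainBounded (lam + 1) r := by
  intro i j T T' hij hadj hne hji
  have hgain : r T i ≤ r T' i :=
    hmono i j T' T hij hadj.symm hne.symm (hadj.beats_flip hij hne hji)
  have h := hnm i j T T' hij hadj hne
  refine le_add_one_mul_of_sub_le_mul_max hlam (sub_nonneg.mpr hgain) ?_
  rw [neg_sub]
  linarith

/-- Flipping the match between `i` and `j` and flipping it back bounds each player's change by `c`
times the other's, with opposite signs; for `c > 1` this forces the winner's change to be a gain. -/
lemma IsGainBounded.monotoneRule {c : ℝ} (hc : 1 < c) (h : IsGainBounded c r) :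
    MonotoneRule r := by
  intro i j T T' hij hadj hne hij'
  have hji' : T'.beats j i := hadj.swap.beats_flip hij.symm hne hij'
  have hj := h j i T T' hij.symm hadj.swap hne hij'
  have hi := h i j T' T hij hadj.symm hne.symm hji'
  exact sub_nonneg.mp (nonneg_of_le_mul_of_le_mul hc hj hi)

end

theorem stmt8_general {n : ℕ} (r : Tournament n → Fin n → ℝ)
    (lam : ℝ) (hlam : 0 < lam) (hnm : TwoNM lam 0 r) :
    MonotoneRule r ↔
      ∀ i j (T T' : Tournament n), i ≠ j → Adjacent i j T T' → T ≠ T' →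
        T.beats j i → r T' i - r T i ≤ (lam + 1) * (r T j - r T' j) :=
  ⟨hnm.isGainBounded_of_monotoneRule hlam.le, IsGainBounded.monotoneRule (by linarith)⟩

theorem stmt8 {n : ℕ} (r : Tournament n → Fin n → ℝ) (hr : IsProbRule r)
    (lam : ℝ) (hlam : 0 < lam) (hnm : TwoNM lam 0 r) :
    MonotoneRule r ↔
      ∀ i j (T T' : Tournament n), i ≠ j → Adjacent i j T T' → T ≠ T' →
        T.beats j i → r T' i - r T i ≤ (lam + 1) * (r T j - r T' j) :=
  stmt8_general r lam hlam hnm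
end

section
/- In the superman-kryptonite tournament T on n agents, under the Iterative Condorcet Rule, agent 1 wins with probability 1/2 − 1/(n(n−1)) and agent n wins with probability 2/(n(n−1)). -/
open Classical Finset

/-- Agents still alive after the first `t` eliminations, when the elimination
order is given by the permutation `π` (agent `π k` is eliminated at step `k`). -/
def remainingAfter {n : ℕ} (π : Equiv.Perm (Fin n)) (t : ℕ) : Finset (Fin n) :=
  Finset.univ.filter fun i => t ≤ ((π.symm i : Fin n) : ℕ)

/-- `w` beats every other member of `S`. -/
def IsCondorcetIn {n : ℕ} (T : Tournament n) (S : Finset (Fin n)) (w : Fin n) : Prop :=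
  w ∈ S ∧ ∀ j ∈ S, j ≠ w → T.beats w j

/-- The Iterative Condorcet Rule with (uniformly random) elimination order `π`
declares `w` the winner: `w` is a Condorcet winner among the remaining agents at
the first time some remaining agent beats all other remaining agents. -/
def ICRWins {n : ℕ} (T : Tournament n) (π : Equiv.Perm (Fin n)) (w : Fin n) : Prop :=
  ∃ t, IsCondorcetIn T (remainingAfter π t) w ∧
    ∀ s < t, ¬ ∃ v, IsCondorcetIn T (remainingAfter π s) v

/-! Let `a` and `b` be the (0-based) elimination steps of the superman `s` and the kryptonite `k`.
The superman loses only to the kryptonite, the kryptonite beats only the superman, and everybody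
else loses to the superman; so there is no Condorcet winner while `s`, `k` and a third agent
remain. Hence: if `k` is eliminated first, at a step `b ≤ n - 3`, then `s` wins; if `s` is
eliminated first, at a step `a ≤ n - 3`, the smallest remaining agent wins, who is neither `s`
nor `k`; otherwise `{a, b} = {n - 2, n - 1}` and `k` wins. Swapping `s` and `k` shows that half
of the `n!` orders eliminate `k` first, and each placement of `s` and `k` at two given steps is
realised by `(n - 2)!` orders. -/

open Equiv
open scoped Nat

lemma cast_factorial_eq_mul_mul_factorial_sub_two {n : ℕ} (hn : 2 ≤ n) :
    (n ! : ℝ) = n * (n - 1) * (n - 2)! := by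
  obtain ⟨m, rfl⟩ := Nat.exists_eq_add_of_le' hn
  simp [Nat.factorial_succ]
  ring

section PermCounting

variable {α : Type*} [DecidableEq α]

lemma exists_perm_apply_eq_pair {p q x y : α} (hpq : p ≠ q) (hxy : x ≠ y) :
    ∃ τ : Perm α, τ p = x ∧ τ q = y := by
  have hqx : swap p x q ≠ x := fun h =>
    hpq ((swap p x).injective (h.trans (swap_apply_left p x).symm)).symm
  exact ⟨swap (swap p x q) y * swap p x, by simp [swap_apply_of_ne_of_ne hqx.symm hxy], by simp⟩

variable [Fintype α]

lemma card_perm_fixing_pair {p q : α} (hpq : p ≠ q) :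
    #{σ : Perm α | σ p = p ∧ σ q = q} = (Fintype.card α - 2)! := by
  have hfix : Perm {a : α // a ≠ p ∧ a ≠ q} ≃ {σ : Perm α // σ p = p ∧ σ q = q} :=
    (Perm.subtypeEquivSubtypePerm _).trans <| Equiv.subtypeEquivRight fun σ =>
      ⟨fun h => ⟨h p (by simp), h q (by simp)⟩, fun h a ha => by
        simp only [not_and_or, not_not] at ha
        rcases ha with rfl | rfl
        exacts [h.1, h.2]⟩
  have hcard : Fintype.card {a : α // a ≠ p ∧ a ≠ q} = Fintype.card α - 2 := by
    rw [Fintype.card_of_subtype ({p, q} : Finset α)ᶜ (by simp), card_compl,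
      card_pair hpq]
  rw [← Fintype.card_subtype, ← Fintype.card_congr hfix, Fintype.card_perm, hcard]

lemma card_perm_apply_eq_pair {p q x y : α} (hpq : p ≠ q) (hxy : x ≠ y) :
    #{σ : Perm α | σ p = x ∧ σ q = y} = (Fintype.card α - 2)! := by
  obtain ⟨τ, rfl, rfl⟩ := exists_perm_apply_eq_pair hpq hxy
  rw [← card_perm_fixing_pair hpq]
  exact card_equiv (Equiv.mulLeft τ⁻¹) fun σ => by simp [symm_apply_eq]

lemma card_perm_symm_apply_eq_pair {x y p q : α} (hxy : x ≠ y) (hpq : p ≠ q) :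
    #{σ : Perm α | σ.symm x = p ∧ σ.symm y = q} = (Fintype.card α - 2)! := by
  rw [← card_perm_apply_eq_pair hpq hxy]
  congr 1
  exact filter_congr fun σ _ => by rw [symm_apply_eq, symm_apply_eq, eq_comm, eq_comm (a := y)]

end PermCounting

lemma two_mul_card_perm_symm_lt {α : Type*} [Fintype α] [LinearOrder α] {x y : α} (hxy : x ≠ y) :
    2 * #{σ : Perm α | σ.symm y < σ.symm x} = (Fintype.card α)! := by
  have hswap : #{σ : Perm α | σ.symm y < σ.symm x} = #{σ : Perm α | σ.symm x < σ.symm y} :=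
    card_equiv (Equiv.mulLeft (swap x y)) fun σ => by simp [Perm.mul_def]
  have hsplit := card_filter_add_card_filter_not (s := (univ : Finset (Perm α)))
    (fun σ => σ.symm y < σ.symm x)
  have hnot : ∀ σ : Perm α, ¬ σ.symm y < σ.symm x ↔ σ.symm x < σ.symm y := fun σ =>
    not_lt.trans ((σ.symm.injective.ne hxy).le_iff_lt)
  rw [filter_congr fun σ _ => hnot σ, ← hswap, card_univ, Fintype.card_perm] at hsplit
  omega

section EliminationPositions

variable {n : ℕ} {x y : Fin n}

lemma two_mul_card_perm_symm_lt_of_add_three_le (hxy : x ≠ y) (hn : 2 ≤ n) :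
    2 * #{π : Perm (Fin n) | π.symm y < π.symm x ∧ (π.symm y : ℕ) + 3 ≤ n} + 2 * (n - 2)! =
      n ! := by
  have hlast : #{π : Perm (Fin n) | π.symm y < π.symm x ∧ ¬ (π.symm y : ℕ) + 3 ≤ n} =
      (n - 2)! := by
    have hpair := card_perm_symm_apply_eq_pair (p := (⟨n - 1, by omega⟩ : Fin n))
      (q := ⟨n - 2, by omega⟩) hxy (by simp [Fin.ext_iff]; omega)
    rw [Fintype.card_fin] at hpair
    rw [← hpair]
    congr 1
    refine filter_congr fun π _ => ?_
    have := (π.symm x).isLt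
    simp only [Fin.lt_def, Fin.ext_iff]
    omega
  have hsplit := card_filter_add_card_filter_not (s := {π : Perm (Fin n) | π.symm y < π.symm x})
    (fun π => (π.symm y : ℕ) + 3 ≤ n)
  rw [filter_filter, filter_filter, hlast] at hsplit
  have hhalf := two_mul_card_perm_symm_lt hxy
  rw [Fintype.card_fin] at hhalf
  omega

lemma card_perm_symm_ge_sub_two (hxy : x ≠ y) (hn : 2 ≤ n) :
    #{π : Perm (Fin n) | n - 2 ≤ (π.symm x : ℕ) ∧ n - 2 ≤ (π.symm y : ℕ)} = 2 * (n - 2)! := by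
  set p : Fin n := ⟨n - 2, by omega⟩
  set q : Fin n := ⟨n - 1, by omega⟩
  have hpq : p ≠ q := by simp [p, q, Fin.ext_iff]; omega
  have hsplit : #{π : Perm (Fin n) | n - 2 ≤ (π.symm x : ℕ) ∧ n - 2 ≤ (π.symm y : ℕ)} =
      #{π : Perm (Fin n) | (π.symm x = p ∧ π.symm y = q) ∨ (π.symm x = q ∧ π.symm y = p)} := by
    congr 1
    refine filter_congr fun π _ => ?_
    have := (π.symm x).isLt
    have := (π.symm y).isLt
    have := Fin.val_ne_of_ne (π.symm.injective.ne hxy)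
    simp only [p, q, Fin.ext_iff]
    omega
  have hdisj : ∀ π : Perm (Fin n), π.symm x = p ∧ π.symm y = q → ¬ (π.symm x = q ∧ π.symm y = p) :=
    fun π h h' => hpq (h.1.symm.trans h'.1)
  rw [hsplit, filter_or, card_union_of_disjoint (disjoint_filter.mpr fun π _ => hdisj π),
    card_perm_symm_apply_eq_pair hxy hpq, card_perm_symm_apply_eq_pair hxy hpq.symm,
    Fintype.card_fin, two_mul]

end EliminationPositions

section IterativeCondorcet

variable {n : ℕ} {T : Tournament n} {π : Perm (Fin n)}

lemma mem_remainingAfter {i : Fin n} {t : ℕ} : i ∈ remainingAfter π t ↔ t ≤ π.symm i := by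
  simp [remainingAfter]

lemma card_remainingAfter (π : Perm (Fin n)) (t : ℕ) : #(remainingAfter π t) = n - t := by
  have hequiv : #(remainingAfter π t) = #{k : Fin n | ¬ (k : ℕ) < t} :=
    card_equiv π.symm fun i => by simp [mem_remainingAfter]
  have hsplit := card_filter_add_card_filter_not (s := (univ : Finset (Fin n))) (· < t)
  rw [Fin.card_filter_val_lt, card_univ, Fintype.card_fin] at hsplit
  omega

lemma IsCondorcetIn.eq {S : Finset (Fin n)} {v w : Fin n} (hv : IsCondorcetIn T S v)
    (hw : IsCondorcetIn T S w) : v = w := by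
  by_contra hvw
  exact (T.total v w hvw).mp (hv.2 w hw.1 (Ne.symm hvw)) (hw.2 v hv.1 hvw)

lemma icrWins_iff_eq_of_isCondorcetIn {t : ℕ} {w : Fin n}
    (hbefore : ∀ s < t, ¬ ∃ v, IsCondorcetIn T (remainingAfter π s) v)
    (hw : IsCondorcetIn T (remainingAfter π t) w) (w' : Fin n) :
    ICRWins T π w' ↔ w' = w := by
  refine ⟨fun ⟨t', hw', hbefore'⟩ => ?_, fun h => h ▸ ⟨t, hw, hbefore⟩⟩
  rcases lt_trichotomy t' t with h | rfl | h
  · exact absurd ⟨w', hw'⟩ (hbefore t' h)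
  · exact hw'.eq hw
  · exact absurd ⟨w, hw⟩ (hbefore' t h)

end IterativeCondorcet

lemma lt_and_add_three_le_or {n : ℕ} {a b : Fin n} (hab : a ≠ b) :
    (b < a ∧ (b : ℕ) + 3 ≤ n) ∨ (n - 2 ≤ (a : ℕ) ∧ n - 2 ≤ (b : ℕ)) ∨
      (a < b ∧ (a : ℕ) + 3 ≤ n) := by
  have := Fin.val_ne_of_ne hab
  have := a.isLt
  have := b.isLt
  simp only [Fin.lt_def]
  omega

-- The paper's agents `1, …, n` are `0, …, n - 1` here: the superman is `0`, the kryptonite `n - 1`.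
def IsSupermanKryptonite {n : ℕ} (T : Tournament n) : Prop :=
  ∀ i j : Fin n, T.beats i j ↔
    ((i.1 < j.1 ∧ ¬(i.1 = 0 ∧ j.1 = n - 1)) ∨ (i.1 = n - 1 ∧ j.1 = 0))

namespace IsSupermanKryptonite

variable {n : ℕ} {T : Tournament n} {s k : Fin n} {S : Finset (Fin n)} {π : Perm (Fin n)}

lemma kryptonite_beats_superman (hT : IsSupermanKryptonite T) (hs : (s : ℕ) = 0)
    (hk : (k : ℕ) = n - 1) : T.beats k s :=
  (hT k s).mpr (Or.inr ⟨hk, hs⟩)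

lemma superman_ne_kryptonite (hT : IsSupermanKryptonite T) (hs : (s : ℕ) = 0)
    (hk : (k : ℕ) = n - 1) : s ≠ k := by
  rintro rfl
  exact T.irrefl s (hT.kryptonite_beats_superman hs hk)

lemma superman_beats (hT : IsSupermanKryptonite T) (hs : (s : ℕ) = 0) (hk : (k : ℕ) = n - 1)
    {j : Fin n} (hjs : j ≠ s) (hjk : j ≠ k) : T.beats s j := by
  have := Fin.val_ne_of_ne hjs
  have := Fin.val_ne_of_ne hjk
  have := j.isLt
  rw [hT]
  omega

lemma not_beats_superman (hT : IsSupermanKryptonite T) (hs : (s : ℕ) = 0) (hk : (k : ℕ) = n - 1)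
    {v : Fin n} (hvk : v ≠ k) : ¬ T.beats v s := by
  have := Fin.val_ne_of_ne hvk
  rw [hT]
  omega

lemma kryptonite_not_beats (hT : IsSupermanKryptonite T) (hs : (s : ℕ) = 0) (hk : (k : ℕ) = n - 1)
    {m : Fin n} (hms : m ≠ s) : ¬ T.beats k m := by
  have := Fin.val_ne_of_ne hms
  have := m.isLt
  rw [hT]
  omega

lemma beats_of_lt (hT : IsSupermanKryptonite T) (hs : (s : ℕ) = 0) {i j : Fin n} (his : i ≠ s)
    (hij : i < j) : T.beats i j := by
  have := Fin.val_ne_of_ne his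
  have := Fin.lt_def.mp hij
  rw [hT]
  omega

lemma not_exists_isCondorcetIn (hT : IsSupermanKryptonite T) (hs : (s : ℕ) = 0)
    (hk : (k : ℕ) = n - 1) (hsS : s ∈ S) (hkS : k ∈ S) (hS : 3 ≤ #S) :
    ¬ ∃ v, IsCondorcetIn T S v := by
  rintro ⟨v, -, hv⟩
  obtain ⟨m, hmS, hms, hmk⟩ : ∃ m ∈ S, m ≠ s ∧ m ≠ k := by
    by_contra! h
    have hsub : S ⊆ {s, k} := fun m hm =>
      mem_insert.mpr (or_iff_not_imp_left.mpr fun hms => mem_singleton.mpr (h m hm hms))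
    exact absurd ((card_le_card hsub).trans card_le_two) (by omega)
  have hsk := hT.superman_ne_kryptonite hs hk
  by_cases hvs : v = s
  · rw [hvs] at hv
    exact (T.total k s hsk.symm).mp (hT.kryptonite_beats_superman hs hk) (hv k hkS hsk.symm)
  by_cases hvk : v = k
  · rw [hvk] at hv
    exact hT.kryptonite_not_beats hs hk hms (hv m hmS hmk)
  exact hT.not_beats_superman hs hk hvk (hv s hsS (Ne.symm hvs))

lemma isCondorcetIn_superman (hT : IsSupermanKryptonite T) (hs : (s : ℕ) = 0)
    (hk : (k : ℕ) = n - 1) (hsS : s ∈ S) (hkS : k ∉ S) : IsCondorcetIn T S s :=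
  ⟨hsS, fun _ hj hjs => hT.superman_beats hs hk hjs (ne_of_mem_of_not_mem hj hkS)⟩

lemma isCondorcetIn_kryptonite (hT : IsSupermanKryptonite T) (hs : (s : ℕ) = 0)
    (hk : (k : ℕ) = n - 1) : IsCondorcetIn T {s, k} k :=
  ⟨by simp, fun j hj hjk => by
    obtain rfl : j = s := by simpa [hjk] using hj
    exact hT.kryptonite_beats_superman hs hk⟩

lemma isCondorcetIn_min' (hT : IsSupermanKryptonite T) (hs : (s : ℕ) = 0) (hsS : s ∉ S)
    (hS : S.Nonempty) : IsCondorcetIn T S (S.min' hS) :=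
  ⟨min'_mem S hS, fun j hj hjm => hT.beats_of_lt hs (ne_of_mem_of_not_mem (min'_mem S hS) hsS)
    ((min'_le S j hj).lt_of_ne (Ne.symm hjm))⟩

lemma not_exists_isCondorcetIn_remainingAfter (hT : IsSupermanKryptonite T) (hs : (s : ℕ) = 0)
    (hk : (k : ℕ) = n - 1) {t : ℕ} (hts : t ≤ π.symm s) (htk : t ≤ π.symm k) (ht : t + 3 ≤ n) :
    ¬ ∃ v, IsCondorcetIn T (remainingAfter π t) v :=
  hT.not_exists_isCondorcetIn hs hk (mem_remainingAfter.mpr hts) (mem_remainingAfter.mpr htk)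
    (by rw [card_remainingAfter]; omega)

lemma icrWins_iff_eq_superman_of_kryptonite_first (hT : IsSupermanKryptonite T) (hs : (s : ℕ) = 0)
    (hk : (k : ℕ) = n - 1) (hks : π.symm k < π.symm s) (hk3 : (π.symm k : ℕ) + 3 ≤ n)
    (w : Fin n) : ICRWins T π w ↔ w = s := by
  have := Fin.lt_def.mp hks
  refine icrWins_iff_eq_of_isCondorcetIn (t := π.symm k + 1)
    (fun t ht => hT.not_exists_isCondorcetIn_remainingAfter hs hk (by omega) (by omega) (by omega))
    (hT.isCondorcetIn_superman hs hk ?_ ?_) w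
  · exact mem_remainingAfter.mpr (by omega)
  · simp [mem_remainingAfter]

lemma icrWins_iff_eq_kryptonite_of_last_two (hT : IsSupermanKryptonite T) (hs : (s : ℕ) = 0)
    (hk : (k : ℕ) = n - 1) (hs2 : n - 2 ≤ π.symm s) (hk2 : n - 2 ≤ π.symm k) (w : Fin n) :
    ICRWins T π w ↔ w = k := by
  have hsk := hT.superman_ne_kryptonite hs hk
  have hsub : {s, k} ⊆ remainingAfter π (n - 2) := by
    simp [insert_subset_iff, mem_remainingAfter, hs2, hk2]
  have hfinal : remainingAfter π (n - 2) = {s, k} :=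
    (eq_of_subset_of_card_le hsub (by rw [card_remainingAfter, card_pair hsk]; omega)).symm
  refine icrWins_iff_eq_of_isCondorcetIn (t := n - 2)
    (fun t ht => hT.not_exists_isCondorcetIn_remainingAfter hs hk (by omega) (by omega) (by omega))
    ?_ w
  rw [hfinal]
  exact hT.isCondorcetIn_kryptonite hs hk

lemma exists_icrWins_iff_eq_ordinary_of_superman_first (hT : IsSupermanKryptonite T)
    (hs : (s : ℕ) = 0) (hk : (k : ℕ) = n - 1) (hsk : π.symm s < π.symm k) (hs3 : (π.symm s : ℕ) + 3 ≤ n) :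
    ∃ m, m ≠ s ∧ m ≠ k ∧ ∀ w, ICRWins T π w ↔ w = m := by
  have := Fin.lt_def.mp hsk
  set S := remainingAfter π (π.symm s + 1)
  have hsS : s ∉ S := by simp [S, mem_remainingAfter]
  have hS : 1 < #S := by rw [card_remainingAfter]; omega
  have hne : S.Nonempty := card_pos.mp (by omega)
  have hbefore : ∀ t < (π.symm s : ℕ) + 1, ¬ ∃ v, IsCondorcetIn T (remainingAfter π t) v :=
    fun t ht => hT.not_exists_isCondorcetIn_remainingAfter hs hk (by omega) (by omega) (by omega)
  refine ⟨S.min' hne, ne_of_mem_of_not_mem (min'_mem S hne) hsS, fun hmk => ?_,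
    icrWins_iff_eq_of_isCondorcetIn hbefore (hT.isCondorcetIn_min' hs hsS hne)⟩
  have hlt := Fin.lt_def.mp (hmk ▸ min'_lt_max'_of_card S hS)
  have := (S.max' (by omega)).isLt
  omega

lemma icrWins_superman_iff (hT : IsSupermanKryptonite T) (hs : (s : ℕ) = 0)
    (hk : (k : ℕ) = n - 1) :
    ICRWins T π s ↔ π.symm k < π.symm s ∧ (π.symm k : ℕ) + 3 ≤ n := by
  have hsk := hT.superman_ne_kryptonite hs hk
  rcases lt_and_add_three_le_or (π.symm.injective.ne hsk) with h | h | h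
  · exact iff_of_true ((hT.icrWins_iff_eq_superman_of_kryptonite_first hs hk h.1 h.2 s).mpr rfl) h
  · rw [hT.icrWins_iff_eq_kryptonite_of_last_two hs hk h.1 h.2]
    exact iff_of_false hsk (by omega)
  · obtain ⟨m, hms, -, hm⟩ := hT.exists_icrWins_iff_eq_ordinary_of_superman_first hs hk h.1 h.2
    rw [hm]
    exact iff_of_false hms.symm (by omega)

lemma icrWins_kryptonite_iff (hT : IsSupermanKryptonite T) (hs : (s : ℕ) = 0)
    (hk : (k : ℕ) = n - 1) :
    ICRWins T π k ↔ n - 2 ≤ (π.symm s : ℕ) ∧ n - 2 ≤ (π.symm k : ℕ) := by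
  have hsk := hT.superman_ne_kryptonite hs hk
  rcases lt_and_add_three_le_or (π.symm.injective.ne hsk) with h | h | h
  · rw [hT.icrWins_iff_eq_superman_of_kryptonite_first hs hk h.1 h.2]
    exact iff_of_false hsk.symm (by omega)
  · exact iff_of_true ((hT.icrWins_iff_eq_kryptonite_of_last_two hs hk h.1 h.2 k).mpr rfl) h
  · obtain ⟨m, -, hmk, hm⟩ := hT.exists_icrWins_iff_eq_ordinary_of_superman_first hs hk h.1 h.2
    rw [hm]
    exact iff_of_false hmk.symm (by omega)

end IsSupermanKryptonite

/-- In the superman-kryptonite tournament on `n` agents, under ICR the superman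
(agent `0`) wins with probability `1/2 - 1/(n(n-1))` and the kryptonite
(agent `n-1`) wins with probability `2/(n(n-1))`. -/
theorem stmt11 {n : ℕ} (hn : 3 ≤ n) (T : Tournament n)
    (hT : ∀ i j : Fin n, T.beats i j ↔
      ((i.1 < j.1 ∧ ¬(i.1 = 0 ∧ j.1 = n - 1)) ∨ (i.1 = n - 1 ∧ j.1 = 0))) :
    ((Finset.univ.filter fun π : Equiv.Perm (Fin n) =>
        ICRWins T π ⟨0, by omega⟩).card : ℝ) / n.factorial
      = 1 / 2 - 1 / (n * (n - 1)) ∧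
    ((Finset.univ.filter fun π : Equiv.Perm (Fin n) =>
        ICRWins T π ⟨n - 1, by omega⟩).card : ℝ) / n.factorial
      = 2 / (n * (n - 1)) := by
  have hSK : IsSupermanKryptonite T := hT
  set s : Fin n := ⟨0, by omega⟩
  set k : Fin n := ⟨n - 1, by omega⟩
  have hsk : s ≠ k := hSK.superman_ne_kryptonite rfl rfl
  rw [filter_congr fun π _ => hSK.icrWins_superman_iff (s := s) (k := k) rfl rfl,
    filter_congr fun π _ => hSK.icrWins_kryptonite_iff (s := s) (k := k) rfl rfl,
    card_perm_symm_ge_sub_two hsk (by omega)]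
  have hsuper := congrArg (Nat.cast : ℕ → ℝ)
    (two_mul_card_perm_symm_lt_of_add_three_le hsk (by omega))
  push_cast at hsuper
  have hn1 : (n : ℝ) - 1 ≠ 0 := sub_ne_zero.mpr (by exact_mod_cast (by omega : n ≠ 1))
  rw [cast_factorial_eq_mul_mul_factorial_sub_two (n := n) (by omega)] at hsuper ⊢
  push_cast
  constructor
  · field_simp
    linarith
  · field_simp
end

section
/- In the 4-agent superman-kryptonite tournament, the PageRank tournament rule assigns probabilities (4/13, 3/13, 2/13, 4/13) to agents 1, 2, 3, 4. Moreover, if agents 1 and 3 reverse their match, the resulting tournament is a rotation of the original, with PageRank probabilities (4/13, 4/13, 3/13, 2/13), so agent 3 gains 1/13 while agent 1's probability is unchanged. -/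
/-!
The balance equations of PageRank sum to a tautology, so the one for agent 1 can be dropped;
the rest solve by substitution in terms of `a`, and normalisation gives `13 a / 4 = 1`.
Reversing the match between agents 1 and 3 yields the original tournament relabelled by
`4 ↦ 1, 1 ↦ 2, 2 ↦ 3, 3 ↦ 4`, so the second system is the first one with `(a, b, c, d)`
replaced by `(b', c', d', a')`.
-/

theorem supermanKryptonite_pageRank_eq {a b c d : ℝ} (h2 : b = c / 2 + d / 2) (h3 : c = d / 2)
    (h4 : d = a) (h5 : a + b + c + d = 1) :
    a = 4 / 13 ∧ b = 3 / 13 ∧ c = 2 / 13 ∧ d = 4 / 13 := by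
  have ha : a = 4 / 13 := by linarith
  exact ⟨ha, by linarith, by linarith, h4.trans ha⟩

theorem stmt14_general (a b c d a' b' c' d' : ℝ)
    (h2 : b = c / 2 + d / 2) (h3 : c = d / 2) (h4 : d = a)
    (h5 : a + b + c + d = 1)
    (h1' : a' = b') (h3' : c' = a' / 2 + d' / 2)
    (h4' : d' = a' / 2) (h5' : a' + b' + c' + d' = 1) :
    (a = 4 / 13 ∧ b = 3 / 13 ∧ c = 2 / 13 ∧ d = 4 / 13) ∧
    (a' = 4 / 13 ∧ b' = 4 / 13 ∧ c' = 3 / 13 ∧ d' = 2 / 13) ∧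
    c' - c = 1 / 13 ∧ a' = a := by
  obtain ⟨ha, hb, hc, hd⟩ := supermanKryptonite_pageRank_eq h2 h3 h4 h5
  obtain ⟨hb', hc', hd', ha'⟩ :=
    supermanKryptonite_pageRank_eq (h3'.trans (add_comm _ _)) h4' h1' (by linarith)
  refine ⟨⟨ha, hb, hc, hd⟩, ⟨ha', hb', hc', hd'⟩, ?_, ha'.trans ha.symm⟩
  rw [hc', hc]
  norm_num

/-- PageRank probabilities in the 4-agent superman-kryptonite tournament
`1≻2, 1≻3, 2≻3, 2≻4, 3≻4, 4≻1` (variables `a, b, c, d` for agents `1,2,3,4`),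
and in the tournament obtained when agents 1 and 3 reverse their match
(variables `a', b', c', d'`), which is a rotation of the original.  Each system
is the defining linear system of the PageRank rule (each agent splits her
probability equally among the agents that beat her).  The solutions are
`(4/13, 3/13, 2/13, 4/13)` and `(4/13, 4/13, 3/13, 2/13)` respectively, so
agent 3 gains `1/13` while agent 1's probability is unchanged. -/
theorem stmt14 (a b c d a' b' c' d' : ℝ)
    (h1 : a = b + c / 2) (h2 : b = c / 2 + d / 2) (h3 : c = d / 2) (h4 : d = a)
    (h5 : a + b + c + d = 1)
    (h1' : a' = b') (h2' : b' = c' + d' / 2) (h3' : c' = a' / 2 + d' / 2)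
    (h4' : d' = a' / 2) (h5' : a' + b' + c' + d' = 1) :
    (a = 4 / 13 ∧ b = 3 / 13 ∧ c = 2 / 13 ∧ d = 4 / 13) ∧
    (a' = 4 / 13 ∧ b' = 4 / 13 ∧ c' = 3 / 13 ∧ d' = 2 / 13) ∧
    c' - c = 1 / 13 ∧ a' = a :=
  stmt14_general a b c d a' b' c' d' h2 h3 h4 h5 h1' h3' h4' h5'
end

section
/- Let n = 2^h and let T be the superman-kryptonite tournament on n agents. For every m ≥ h + 1, the RSEB winning probability of the kryptonite in a tournament on 2^m agents containing T as a dominant sub-tournament satisfies the recurrence p_m = (2 / C(2^m, 2^{m−1})) · [C(2^m − n, 2^{m−1} − 1) + C(2^m − n, 2^{m−1} − n) · p_{m−1}], with p_h = 0. -/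
open Classical Finset

/-- The winner of a single-elimination bracket of height `h` with seeding `σ`
(leaf `k` holds agent `σ k`), played according to tournament `T`. -/
noncomputable def bracketWinner {n : ℕ} (T : Tournament n) :
    (h : ℕ) → (Fin (2 ^ h) → Fin n) → Fin n
  | 0, σ => σ ⟨0, Nat.two_pow_pos 0⟩
  | h + 1, σ =>
    let a := bracketWinner T h (fun k => σ ⟨k.1, by
      have := k.2; simp only [pow_succ] at *; omega⟩)
    let b := bracketWinner T h (fun k => σ ⟨2 ^ h + k.1, by
      have := k.2; simp only [pow_succ] at *; omega⟩)
    if T.beats a b then a else b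

/-!
Write `R` for the agents of the superman–kryptonite tournament, `s` for the superman and `k` for
the kryptonite. In a bracket with halves `U` and `V`, `k` wins iff for one half, say `U`, either `k`
is the only agent of `R` in `U` (then `s` wins `V` and loses to `k` in the final), or `R ⊆ U` and
`k` wins `U` (then a dummy wins `V`). Conversely, if `k` wins `U` and some agent of `R` lies in `V`,
the winner of `V` is in `R` and loses to `k`, so it is `s`; then `U` misses `s`, and if it held an
agent of `R` other than `k`, one of those agents, who all beat `k` and the dummies, would win `U`.

Count the seedings by a fixed set `A ⊇ R` of `2^(t+1)` agents. The first case leaves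
`C(|A| - |R|, 2^t - 1)` choices for the agents of `U`, the second `C(|A| - |R|, 2^t - |R|)`, and by
induction the number of seedings of `U` won by `k` in the second case is the same for every
admissible `U`. Hence that number depends only on `t`, it vanishes for `|A| = |R| = 2^h` (a half
can neither hold all of `R` nor consist of `k` alone), and it satisfies the recursion which, divided
by `|A|! = C(2^(t+1), 2^t) (2^t)!²`, is the one for `p`.
-/

open scoped Nat

section Halves

variable {β : Type*} {t : ℕ}

def halvesEquiv (t : ℕ) : Fin (2 ^ t) ⊕ Fin (2 ^ t) ≃ Fin (2 ^ (t + 1)) :=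
  finSumFinEquiv.trans (finCongr (by ring))

def splitHalves (t : ℕ) :
    (Fin (2 ^ (t + 1)) → β) ≃ (Fin (2 ^ t) → β) × (Fin (2 ^ t) → β) :=
  ((halvesEquiv t).arrowCongr (Equiv.refl β)).symm.trans (Equiv.sumArrowEquivProdArrow _ _ _)

def leftHalf (g : Fin (2 ^ (t + 1)) → β) : Fin (2 ^ t) → β := (splitHalves t g).1

def rightHalf (g : Fin (2 ^ (t + 1)) → β) : Fin (2 ^ t) → β := (splitHalves t g).2

variable [DecidableEq β]

theorem image_univ_eq_union_halves (g : Fin (2 ^ (t + 1)) → β) :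
    univ.image g = univ.image (leftHalf g) ∪ univ.image (rightHalf g) := by
  ext x
  simp only [mem_union, mem_image, mem_univ, true_and, leftHalf, rightHalf, splitHalves,
    Equiv.trans_apply, Equiv.sumArrowEquivProdArrow_apply_fst,
    Equiv.sumArrowEquivProdArrow_apply_snd, Equiv.arrowCongr_symm, Equiv.arrowCongr_apply,
    Function.comp_apply, Equiv.symm_symm, Equiv.refl_symm, Equiv.coe_refl, id]
  constructor
  · rintro ⟨i, rfl⟩
    obtain ⟨j | j, rfl⟩ := (halvesEquiv t).surjective i
    · exact Or.inl ⟨j, rfl⟩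
    · exact Or.inr ⟨j, rfl⟩
  · rintro (⟨j, rfl⟩ | ⟨j, rfl⟩) <;> exact ⟨_, rfl⟩

theorem disjoint_and_card_image_halves {g : Fin (2 ^ (t + 1)) → β}
    (hg : #(univ.image g) = 2 ^ (t + 1)) :
    Disjoint (univ.image (leftHalf g)) (univ.image (rightHalf g)) ∧
      #(univ.image (leftHalf g)) = 2 ^ t ∧ #(univ.image (rightHalf g)) = 2 ^ t := by
  have hL : #(univ.image (leftHalf g)) ≤ 2 ^ t := card_image_le.trans_eq (card_fin _)
  have hR : #(univ.image (rightHalf g)) ≤ 2 ^ t := card_image_le.trans_eq (card_fin _)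
  have hLR := card_union_le (univ.image (leftHalf g)) (univ.image (rightHalf g))
  rw [← image_univ_eq_union_halves, hg, pow_succ] at hLR
  refine ⟨card_union_eq_card_add_card.1 ?_, by omega, by omega⟩
  rw [← image_univ_eq_union_halves, hg, pow_succ]
  omega

end Halves


section Counting

variable {α : Type*} [Fintype α] [DecidableEq α]

theorem card_filter_image_eq {k : ℕ} {C : Finset α} (hC : #C = k) :
    #{v : Fin k → α | univ.image v = C} = k ! := by
  have hbij : ∀ (v : Fin k → α) (hv : univ.image v = C), Function.Bijective
      (fun i => (⟨v i, hv ▸ mem_image_of_mem v (mem_univ i)⟩ : C)) := by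
    intro v hv
    rw [Fintype.bijective_iff_surjective_and_card, Fintype.card_coe, hC, Fintype.card_fin]
    refine ⟨fun ⟨x, hx⟩ => ?_, rfl⟩
    obtain ⟨i, -, rfl⟩ := mem_image.1 (hv ▸ hx)
    exact ⟨i, rfl⟩
  have hcard : Fintype.card (Fin k ≃ C) = k ! := by
    rw [Fintype.card_equiv (Fintype.equivOfCardEq (by simp [hC])), Fintype.card_fin]
  rw [← hcard, ← card_univ]
  refine card_bij (fun v hv => Equiv.ofBijective _ (hbij v (mem_filter.1 hv).2))
    (fun _ _ => mem_univ _) (fun v₁ _ v₂ _ h => ?_) (fun e _ => ⟨fun i => e i, ?_, ?_⟩)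
  · funext i
    exact congrArg Subtype.val (DFunLike.congr_fun h i)
  · refine mem_filter.2 ⟨mem_univ _, ?_⟩
    ext x
    simp only [mem_image, mem_univ, true_and]
    refine ⟨fun ⟨i, hi⟩ => hi ▸ (e i).2, fun hx => ?_⟩
    exact ⟨e.symm ⟨x, hx⟩, by simp⟩
  · ext i
    rfl

theorem card_filter_image_mem {ι : Type*} [Fintype ι] [DecidableEq ι] (S : Finset (Finset α))
    (P : (ι → α) → Prop) [DecidablePred P] (c : ℕ)
    (hS : ∀ B ∈ S, #{u : ι → α | univ.image u = B ∧ P u} = c) :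
    #{u : ι → α | univ.image u ∈ S ∧ P u} = #S * c := by
  rw [card_eq_sum_card_fiberwise (f := fun u => univ.image u) (t := S)
    fun u hu => (mem_filter.1 hu).2.1, ← smul_eq_mul, ← sum_const]
  refine sum_congr rfl fun B hB => ?_
  rw [← hS B hB, filter_filter]
  congr 1
  refine filter_congr fun u _ => ?_
  constructor
  · rintro ⟨⟨-, hP⟩, rfl⟩; exact ⟨rfl, hP⟩
  · rintro ⟨rfl, hP⟩; exact ⟨⟨hB, hP⟩, rfl⟩

omit [Fintype α] in
theorem union_eq_iff_mem_powersetCard {k : ℕ} {X Y A : Finset α} (hX : #X ≤ k) (hY : #Y ≤ k)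
    (hA : #A = k + k) : X ∪ Y = A ↔ X ∈ powersetCard k A ∧ Y = A \ X := by
  constructor
  · rintro rfl
    have hle := card_union_le X Y
    have hdisj : Disjoint X Y := card_union_eq_card_add_card.1 (by omega)
    exact ⟨mem_powersetCard.2 ⟨subset_union_left, by omega⟩,
      (union_sdiff_cancel_left hdisj).symm⟩
  · rintro ⟨hXA, rfl⟩
    exact union_sdiff_of_subset (mem_powersetCard.1 hXA).1

theorem card_filter_image_union_eq {k : ℕ} {A : Finset α} (hA : #A = k + k)
    (P : (Fin k → α) → Prop) [DecidablePred P] :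
    #{uv : (Fin k → α) × (Fin k → α) | univ.image uv.1 ∪ univ.image uv.2 = A ∧ P uv.1} =
      #{u : Fin k → α | univ.image u ∈ powersetCard k A ∧ P u} * k ! := by
  have hle : ∀ u : Fin k → α, #(univ.image u) ≤ k := fun u =>
    (card_image_le).trans_eq (card_fin k)
  have hiff : ∀ uv : (Fin k → α) × (Fin k → α),
      univ.image uv.1 ∪ univ.image uv.2 = A ↔
        univ.image uv.1 ∈ powersetCard k A ∧ univ.image uv.2 = A \ univ.image uv.1 :=
    fun uv => union_eq_iff_mem_powersetCard (hle _) (hle _) hA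
  rw [card_eq_sum_card_fiberwise (f := Prod.fst)
    (t := {u : Fin k → α | univ.image u ∈ powersetCard k A ∧ P u}) fun uv huv => by
      simp only [mem_coe, mem_filter, mem_univ, true_and, hiff] at huv ⊢
      exact ⟨huv.1.1, huv.2⟩, ← smul_eq_mul, ← sum_const]
  refine sum_congr rfl fun u hu => ?_
  simp only [mem_filter, mem_univ, true_and] at hu
  have hcard : #(A \ univ.image u) = k := by
    rw [card_sdiff_of_subset (mem_powersetCard.1 hu.1).1, hA, (mem_powersetCard.1 hu.1).2]
    omega
  rw [← card_filter_image_eq hcard]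
  refine card_nbij' Prod.snd (fun v => (u, v)) ?_ ?_ ?_ ?_
  · intro uv huv
    simp only [mem_coe, mem_filter, mem_univ, true_and, hiff] at huv ⊢
    rw [← huv.2]
    exact huv.1.1.2
  · intro v hv
    simp only [mem_coe, mem_filter, mem_univ, true_and, hiff] at hv ⊢
    exact ⟨⟨⟨hu.1, hv⟩, hu.2⟩, trivial⟩
  · intro uv huv
    exact Prod.ext (mem_filter.1 huv).2.symm rfl
  · intro v _
    rfl

theorem card_filter_leftHalf {t : ℕ} {A : Finset α} (hA : #A = 2 ^ (t + 1))
    (P : (Fin (2 ^ t) → α) → Prop) [DecidablePred P] :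
    #{g : Fin (2 ^ (t + 1)) → α | univ.image g = A ∧ P (leftHalf g)} =
      #{u : Fin (2 ^ t) → α | univ.image u ∈ powersetCard (2 ^ t) A ∧ P u} * (2 ^ t)! := by
  rw [← card_filter_image_union_eq (by rw [hA, pow_succ]; ring) P]
  refine card_equiv (splitHalves t) fun g => ?_
  simp only [mem_filter, mem_univ, true_and, image_univ_eq_union_halves g]
  rfl

theorem card_filter_rightHalf {t : ℕ} {A : Finset α} (hA : #A = 2 ^ (t + 1))
    (P : (Fin (2 ^ t) → α) → Prop) [DecidablePred P] :
    #{g : Fin (2 ^ (t + 1)) → α | univ.image g = A ∧ P (rightHalf g)} =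
      #{u : Fin (2 ^ t) → α | univ.image u ∈ powersetCard (2 ^ t) A ∧ P u} * (2 ^ t)! := by
  rw [← card_filter_image_union_eq (by rw [hA, pow_succ]; ring) P]
  refine card_equiv ((splitHalves t).trans (Equiv.prodComm _ _)) fun g => ?_
  simp only [mem_filter, mem_univ, true_and, image_univ_eq_union_halves g]
  show _ ↔ univ.image (rightHalf g) ∪ univ.image (leftHalf g) = A ∧ P (rightHalf g)
  rw [union_comm]

theorem card_filter_powersetCard_inter_eq {k : ℕ} {A R S : Finset α} (hRA : R ⊆ A)
    (hSR : S ⊆ R) (hS : #S ≤ k) :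
    #{B ∈ powersetCard k A | B ∩ R = S} = (#A - #R).choose (k - #S) := by
  rw [← card_sdiff_of_subset hRA, ← card_powersetCard]
  refine card_nbij' (· \ R) (· ∪ S) ?_ ?_ ?_ ?_
  · intro B hB
    simp only [mem_coe, mem_filter, mem_powersetCard] at hB ⊢
    refine ⟨sdiff_subset_sdiff hB.1.1 subset_rfl, ?_⟩
    rw [card_sdiff, inter_comm, hB.2, hB.1.2]
  · intro C hC
    simp only [mem_coe, mem_filter, mem_powersetCard, subset_sdiff] at hC ⊢
    refine ⟨⟨union_subset hC.1.1 (hSR.trans hRA), ?_⟩, ?_⟩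
    · rw [card_union_of_disjoint (hC.1.2.mono_right hSR), hC.2]
      omega
    · rw [union_inter_distrib_right, disjoint_iff_inter_eq_empty.1 hC.1.2, empty_union,
        inter_eq_left.2 hSR]
  · intro B hB
    simp only [mem_coe, mem_filter] at hB
    dsimp only
    rw [← hB.2, sdiff_union_inter]
  · intro C hC
    simp only [mem_coe, mem_powersetCard, subset_sdiff] at hC
    dsimp only
    rw [union_sdiff_distrib, sdiff_eq_empty_iff_subset.2 hSR, union_empty,
      hC.1.2.sdiff_eq_left]

end Counting

theorem Tournament.not_beats_of_beats {n : ℕ} (T : Tournament n) {i j : Fin n}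
    (hij : T.beats i j) : ¬ T.beats j i :=
  (T.total i j (fun h => T.irrefl j (h ▸ hij))).1 hij

section Winner

variable {n t : ℕ} (T : Tournament n)

theorem bracketWinner_succ (g : Fin (2 ^ (t + 1)) → Fin n) :
    bracketWinner T (t + 1) g =
      if T.beats (bracketWinner T t (leftHalf g)) (bracketWinner T t (rightHalf g))
      then bracketWinner T t (leftHalf g) else bracketWinner T t (rightHalf g) := rfl

theorem bracketWinner_mem_image : ∀ {t : ℕ} (g : Fin (2 ^ t) → Fin n),
    bracketWinner T t g ∈ univ.image g
  | 0, g => mem_image_of_mem g (mem_univ _)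
  | t + 1, g => by
    rw [bracketWinner_succ, image_univ_eq_union_halves]
    split
    · exact mem_union_left _ (bracketWinner_mem_image _)
    · exact mem_union_right _ (bracketWinner_mem_image _)

theorem bracketWinner_mem_of_dominates {S : Finset (Fin n)} :
    ∀ {t : ℕ} (g : Fin (2 ^ t) → Fin n), (univ.image g ∩ S).Nonempty →
      (∀ x ∈ S, ∀ y ∈ univ.image g, y ∉ S → T.beats x y) → bracketWinner T t g ∈ S
  | 0, g, ⟨x, hx⟩, _ => by
    obtain ⟨i, -, rfl⟩ := mem_image.1 (mem_inter.1 hx).1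
    obtain rfl : i = ⟨0, Nat.two_pow_pos 0⟩ := Fin.ext (Nat.lt_one_iff.1 i.2)
    exact (mem_inter.1 hx).2
  | t + 1, g, hS, hdom => by
    have hsubL := (image_univ_eq_union_halves g).symm ▸ subset_union_left
    have hsubR := (image_univ_eq_union_halves g).symm ▸ subset_union_right
    have hwL := fun hne => bracketWinner_mem_of_dominates (leftHalf g) hne
      fun x hx y hy => hdom x hx y (hsubL hy)
    have hwR := fun hne => bracketWinner_mem_of_dominates (rightHalf g) hne
      fun x hx y hy => hdom x hx y (hsubR hy)
    have hmemL := hsubL (bracketWinner_mem_image T (leftHalf g))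
    have hmemR := hsubR (bracketWinner_mem_image T (rightHalf g))
    set a := bracketWinner T t (leftHalf g)
    set b := bracketWinner T t (rightHalf g)
    have hab : a ∈ S ∨ b ∈ S := by
      rw [image_univ_eq_union_halves, union_inter_distrib_right] at hS
      obtain ⟨x, hx⟩ := hS
      rcases mem_union.1 hx with hx | hx
      · exact Or.inl (hwL ⟨x, hx⟩)
      · exact Or.inr (hwR ⟨x, hx⟩)
    rw [bracketWinner_succ]
    split_ifs with hbeats
    · by_contra ha
      exact T.not_beats_of_beats (hdom b (hab.resolve_left ha) a hmemL ha) hbeats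
    · by_contra hb
      exact hbeats (hdom a (hab.resolve_right hb) b hmemR hb)

theorem bracketWinner_eq_of_forall_beats {g : Fin (2 ^ t) → Fin n} {x : Fin n}
    (hx : x ∈ univ.image g) (hbeats : ∀ y ∈ univ.image g, y ≠ x → T.beats x y) :
    bracketWinner T t g = x :=
  mem_singleton.1 <|
    bracketWinner_mem_of_dominates T g ⟨x, mem_inter.2 ⟨hx, mem_singleton_self x⟩⟩
    fun _ hx' y hy hyx => mem_singleton.1 hx' ▸ hbeats y hy (by simpa using hyx)

theorem bracketWinner_succ_eq_iff (g : Fin (2 ^ (t + 1)) → Fin n) (x : Fin n)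
    (hne : bracketWinner T t (leftHalf g) ≠ bracketWinner T t (rightHalf g)) :
    bracketWinner T (t + 1) g = x ↔
      (bracketWinner T t (leftHalf g) = x ∧ T.beats x (bracketWinner T t (rightHalf g))) ∨
      (bracketWinner T t (rightHalf g) = x ∧ T.beats x (bracketWinner T t (leftHalf g))) := by
  rw [bracketWinner_succ]
  split_ifs with hbeats
  · constructor
    · rintro rfl; exact Or.inl ⟨rfl, hbeats⟩
    · rintro (⟨rfl, -⟩ | ⟨rfl, hba⟩)
      · rfl
      · exact absurd hbeats (T.not_beats_of_beats hba)
  · constructor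
    · rintro rfl; exact Or.inr ⟨rfl, (T.total _ _ hne.symm).2 hbeats⟩
    · rintro (⟨rfl, hab⟩ | ⟨rfl, -⟩)
      · exact absurd hab hbeats
      · rfl

end Winner

section SupermanKryptonite

variable {N t : ℕ}

/-- `R` plays the role of `[n]`, `s` of agent `1` and `k` of agent `n`. -/
structure IsSupermanKryptonite_s15 (T : Tournament N) (R : Finset (Fin N)) (s k : Fin N) : Prop where
  superman_mem : s ∈ R
  kryptonite_mem : k ∈ R
  superman_ne_kryptonite : s ≠ k
  beats_of_mem_of_notMem : ∀ x ∈ R, ∀ y ∉ R, T.beats x y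
  kryptonite_beats_superman : T.beats k s
  superman_beats : ∀ y ∈ R, y ≠ s → y ≠ k → T.beats s y
  beats_kryptonite : ∀ y ∈ R, y ≠ s → y ≠ k → T.beats y k

def WinningHalf (T : Tournament N) (R : Finset (Fin N)) (k : Fin N) (u : Fin (2 ^ t) → Fin N) :
    Prop :=
  univ.image u ∩ R = {k} ∨ (univ.image u ∩ R = R ∧ bracketWinner T t u = k)

variable {T : Tournament N} {R : Finset (Fin N)} {s k : Fin N}

theorem WinningHalf.mem_image {u : Fin (2 ^ t) → Fin N} (hu : WinningHalf T R k u) :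
    k ∈ univ.image u := by
  rcases hu with hu | ⟨-, hu⟩
  · exact (mem_inter.1 (hu ▸ mem_singleton_self k)).1
  · exact hu ▸ bracketWinner_mem_image T u

theorem not_winningHalf_of_image_subset {u : Fin (2 ^ t) → Fin N} (hu : univ.image u ⊆ R)
    (hcard : #(univ.image u) = 2 ^ t) (hR : #R = 2 ^ (t + 1)) (ht : 1 ≤ t) :
    ¬ WinningHalf T R k u := by
  rintro (hsingle | ⟨hall, -⟩)
  · rw [inter_eq_left.2 hu] at hsingle
    have := Nat.one_lt_two_pow_iff.2 (by omega : t ≠ 0)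
    rw [hsingle, card_singleton] at hcard
    omega
  · have := card_le_card (inter_eq_right.1 hall)
    rw [hR, hcard, pow_succ] at this
    have := Nat.two_pow_pos t
    omega

namespace IsSupermanKryptonite_s15

variable (hT : IsSupermanKryptonite_s15 T R s k)
include hT

theorem eq_superman_of_kryptonite_beats {y : Fin N} (hy : y ∈ R) (hyk : y ≠ k)
    (hky : T.beats k y) : y = s := by
  by_contra hys
  exact T.not_beats_of_beats hky (hT.beats_kryptonite y hy hys hyk)

theorem bracketWinner_ne_kryptonite {u : Fin (2 ^ t) → Fin N} (hs : s ∉ univ.image u)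
    {r : Fin N} (hr : r ∈ univ.image u ∩ R) (hrk : r ≠ k) : bracketWinner T t u ≠ k := by
  have hwin : bracketWinner T t u ∈ (R.erase s).erase k := by
    refine bracketWinner_mem_of_dominates T u ⟨r, ?_⟩ fun x hx y hy hyS => ?_
    · simp only [mem_inter, mem_erase] at hr ⊢
      exact ⟨hr.1, hrk, fun h => hs (h ▸ hr.1), hr.2⟩
    · simp only [mem_erase] at hx hyS
      by_cases hyR : y ∈ R
      · obtain rfl : y = k := by
          by_contra hyk
          exact hyS ⟨hyk, fun hys => hs (hys ▸ hy), hyR⟩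
        exact hT.beats_kryptonite x hx.2.2 hx.2.1 hx.1
      · exact hT.beats_of_mem_of_notMem x hx.2.2 y hyR
  exact (mem_erase.1 hwin).1

theorem winningHalf_of_bracketWinner_eq {u v : Fin (2 ^ t) → Fin N}
    (hdisj : Disjoint (univ.image u) (univ.image v)) (hR : R ⊆ univ.image u ∪ univ.image v)
    (hu : bracketWinner T t u = k) (hkv : T.beats k (bracketWinner T t v)) :
    WinningHalf T R k u := by
  have hk : k ∈ univ.image u := hu ▸ bracketWinner_mem_image T u
  have hv := bracketWinner_mem_image T v
  by_cases hsingle : univ.image u ∩ R = {k}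
  · exact Or.inl hsingle
  refine Or.inr ⟨inter_eq_right.2 fun y hy => ?_, hu⟩
  by_contra hyu
  have hyv : y ∈ univ.image v := (mem_union.1 (hR hy)).resolve_left hyu
  have hvR : bracketWinner T t v ∈ R := bracketWinner_mem_of_dominates T v
    ⟨y, mem_inter.2 ⟨hyv, hy⟩⟩ fun x hx z _ hz => hT.beats_of_mem_of_notMem x hx z hz
  have hvs := hT.eq_superman_of_kryptonite_beats hvR
    (fun h => disjoint_left.1 hdisj hk (h ▸ hv)) hkv
  obtain ⟨r, hr, hrk⟩ : ∃ r ∈ univ.image u ∩ R, r ≠ k := by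
    by_contra! hall
    exact hsingle <|
      eq_singleton_iff_unique_mem.2 ⟨mem_inter.2 ⟨hk, hT.kryptonite_mem⟩, hall⟩
  exact hT.bracketWinner_ne_kryptonite (fun h => disjoint_left.1 hdisj h (hvs ▸ hv)) hr hrk hu

theorem bracketWinner_eq_of_winningHalf {u v : Fin (2 ^ t) → Fin N}
    (hdisj : Disjoint (univ.image u) (univ.image v)) (hR : R ⊆ univ.image u ∪ univ.image v)
    (hu : WinningHalf T R k u) :
    bracketWinner T t u = k ∧ T.beats k (bracketWinner T t v) := by
  have hk := hu.mem_image
  rcases hu with hsingle | ⟨hall, hu⟩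
  · have hnotR : ∀ y ∈ univ.image u, y ≠ k → y ∉ R := fun y hy hyk hyR =>
      hyk (mem_singleton.1 (hsingle ▸ mem_inter.2 ⟨hy, hyR⟩))
    have hs : s ∈ univ.image v := (mem_union.1 (hR hT.superman_mem)).resolve_left
      fun h => hnotR s h hT.superman_ne_kryptonite hT.superman_mem
    have hvs : bracketWinner T t v = s := bracketWinner_eq_of_forall_beats T hs fun y hy hys => by
      by_cases hyR : y ∈ R
      · exact hT.superman_beats y hyR hys fun hyk => disjoint_left.1 hdisj hk (hyk ▸ hy)
      · exact hT.beats_of_mem_of_notMem s hT.superman_mem y hyR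
    refine ⟨bracketWinner_eq_of_forall_beats T hk fun y hy hyk => ?_,
      hvs ▸ hT.kryptonite_beats_superman⟩
    exact hT.beats_of_mem_of_notMem k hT.kryptonite_mem y (hnotR y hy hyk)
  · refine ⟨hu, hT.beats_of_mem_of_notMem k hT.kryptonite_mem _ fun hvR => ?_⟩
    exact disjoint_left.1 hdisj (mem_inter.1 (hall.symm ▸ hvR)).1 (bracketWinner_mem_image T v)

theorem bracketWinner_eq_kryptonite_iff {g : Fin (2 ^ (t + 1)) → Fin N}
    (hdisj : Disjoint (univ.image (leftHalf g)) (univ.image (rightHalf g)))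
    (hR : R ⊆ univ.image g) :
    bracketWinner T (t + 1) g = k ↔
      WinningHalf T R k (leftHalf g) ∨ WinningHalf T R k (rightHalf g) := by
  rw [image_univ_eq_union_halves] at hR
  have hR' := union_comm (univ.image (leftHalf g)) _ ▸ hR
  have hne : bracketWinner T t (leftHalf g) ≠ bracketWinner T t (rightHalf g) := fun h =>
    disjoint_left.1 hdisj (bracketWinner_mem_image T _) (h ▸ bracketWinner_mem_image T _)
  rw [bracketWinner_succ_eq_iff T g k hne]
  exact or_congr
    ⟨fun h => hT.winningHalf_of_bracketWinner_eq hdisj hR h.1 h.2,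
      hT.bracketWinner_eq_of_winningHalf hdisj hR⟩
    ⟨fun h => hT.winningHalf_of_bracketWinner_eq hdisj.symm hR' h.1 h.2,
      hT.bracketWinner_eq_of_winningHalf hdisj.symm hR'⟩

end IsSupermanKryptonite_s15

end SupermanKryptonite

section WinCount

variable {N : ℕ}

/-- Seedings are arbitrary functions; when `#A = 2 ^ t`, those with image `A` are exactly the
bijections onto `A`. -/
noncomputable def winCount (T : Tournament N) (t : ℕ) (A : Finset (Fin N)) (x : Fin N) : ℕ :=
  #{g : Fin (2 ^ t) → Fin N | univ.image g = A ∧ bracketWinner T t g = x}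

def kryptoniteWinCount (h : ℕ) : ℕ → ℕ
  | 0 => 0
  | t + 1 => if t < h then 0 else
      2 * (((2 ^ (t + 1) - 2 ^ h).choose (2 ^ t - 1) * (2 ^ t)! +
        (2 ^ (t + 1) - 2 ^ h).choose (2 ^ t - 2 ^ h) * kryptoniteWinCount h t) * (2 ^ t)!)

theorem kryptoniteWinCount_self (h : ℕ) : kryptoniteWinCount h h = 0 := by
  cases h <;> simp [kryptoniteWinCount]

theorem kryptoniteWinCount_succ {h t : ℕ} (ht : h ≤ t) :
    kryptoniteWinCount h (t + 1) =
      2 * (((2 ^ (t + 1) - 2 ^ h).choose (2 ^ t - 1) * (2 ^ t)! +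
        (2 ^ (t + 1) - 2 ^ h).choose (2 ^ t - 2 ^ h) * kryptoniteWinCount h t) * (2 ^ t)!) := by
  rw [kryptoniteWinCount, if_neg (by omega)]

variable {T : Tournament N} {R A : Finset (Fin N)} {s k : Fin N} {t : ℕ}

theorem card_filter_winningHalf (hk : k ∈ R) (hRA : R ⊆ A) (hR : 2 ≤ #R) (hRt : #R ≤ 2 ^ t)
    {w : ℕ} (hw : ∀ B, R ⊆ B → #B = 2 ^ t → winCount T t B k = w) :
    #{u : Fin (2 ^ t) → Fin N | univ.image u ∈ powersetCard (2 ^ t) A ∧ WinningHalf T R k u} =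
      (#A - #R).choose (2 ^ t - 1) * (2 ^ t)! + (#A - #R).choose (2 ^ t - #R) * w := by
  set S₁ := {B ∈ powersetCard (2 ^ t) A | B ∩ R = {k}}
  set S₂ := {B ∈ powersetCard (2 ^ t) A | B ∩ R = R}
  have hsplit : univ.filter (fun u : Fin (2 ^ t) → Fin N =>
        univ.image u ∈ powersetCard (2 ^ t) A ∧ WinningHalf T R k u) =
      univ.filter (fun u => univ.image u ∈ S₁ ∧ True) ∪
        univ.filter (fun u => univ.image u ∈ S₂ ∧ bracketWinner T t u = k) := by
    rw [← filter_or]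
    refine filter_congr fun u _ => ?_
    simp only [WinningHalf, S₁, S₂, mem_filter, and_true]
    tauto
  have hdisj :
      Disjoint (univ.filter fun u : Fin (2 ^ t) → Fin N => univ.image u ∈ S₁ ∧ True)
        (univ.filter fun u => univ.image u ∈ S₂ ∧ bracketWinner T t u = k) := by
    refine disjoint_filter.2 fun u _ h₁ h₂ => ?_
    have := (mem_filter.1 h₁.1).2.symm.trans (mem_filter.1 h₂.1).2
    rw [← this, card_singleton] at hR
    omega
  rw [hsplit, card_union_of_disjoint hdisj,
    card_filter_image_mem S₁ (fun _ => True) _ fun B hB => by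
      simpa using card_filter_image_eq (mem_powersetCard.1 (mem_filter.1 hB).1).2,
    card_filter_image_mem S₂ (fun u => bracketWinner T t u = k) _ fun B hB =>
      hw B (inter_eq_right.1 (mem_filter.1 hB).2) (mem_powersetCard.1 (mem_filter.1 hB).1).2,
    card_filter_powersetCard_inter_eq hRA (singleton_subset_iff.2 hk)
      (by simpa using Nat.one_le_two_pow),
    card_filter_powersetCard_inter_eq hRA subset_rfl hRt, card_singleton]

namespace IsSupermanKryptonite_s15

variable (hT : IsSupermanKryptonite_s15 T R s k)
include hT

theorem winCount_self {h : ℕ} (hR : #R = 2 ^ h) (hh : 2 ≤ h) : winCount T h R k = 0 := by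
  obtain ⟨t, rfl⟩ : ∃ t, h = t + 1 := ⟨h - 1, by omega⟩
  rw [winCount, card_eq_zero, filter_eq_empty_iff]
  rintro g - ⟨hg, hwin⟩
  obtain ⟨hdisj, hcardL, hcardR⟩ := disjoint_and_card_image_halves (hg ▸ hR)
  have hsub := hg ▸ image_univ_eq_union_halves g
  rw [hT.bracketWinner_eq_kryptonite_iff hdisj hg.superset] at hwin
  rcases hwin with hwin | hwin
  · exact not_winningHalf_of_image_subset (hsub ▸ subset_union_left) hcardL hR (by omega) hwin
  · exact not_winningHalf_of_image_subset (hsub ▸ subset_union_right) hcardR hR (by omega) hwin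

theorem winCount_succ {h : ℕ} (hR : #R = 2 ^ h) (hh : 2 ≤ h) (ht : h ≤ t) (hRA : R ⊆ A)
    (hA : #A = 2 ^ (t + 1)) {w : ℕ}
    (hw : ∀ B, R ⊆ B → #B = 2 ^ t → winCount T t B k = w) :
    winCount T (t + 1) A k =
      2 * (((2 ^ (t + 1) - 2 ^ h).choose (2 ^ t - 1) * (2 ^ t)! +
        (2 ^ (t + 1) - 2 ^ h).choose (2 ^ t - 2 ^ h) * w) * (2 ^ t)!) := by
  have hhalves : ∀ g : Fin (2 ^ (t + 1)) → Fin N, univ.image g = A →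
      Disjoint (univ.image (leftHalf g)) (univ.image (rightHalf g)) :=
    fun g hg => (disjoint_and_card_image_halves (hg ▸ hA)).1
  have hsplit : winCount T (t + 1) A k =
      #{g : Fin (2 ^ (t + 1)) → Fin N | univ.image g = A ∧ WinningHalf T R k (leftHalf g)} +
      #{g : Fin (2 ^ (t + 1)) → Fin N |
        univ.image g = A ∧ WinningHalf T R k (rightHalf g)} := by
    rw [winCount, ← card_union_of_disjoint, ← filter_or]
    · refine congrArg card (filter_congr fun g _ => ?_)
      rw [← and_or_left]
      exact and_congr_right fun hg =>
        hT.bracketWinner_eq_kryptonite_iff (hhalves g hg) (hg ▸ hRA)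
    · exact disjoint_filter.2 fun g _ hL hR =>
        disjoint_left.1 (hhalves g hL.1) hL.2.mem_image hR.2.mem_image
  have hR2 : 2 ≤ #R := hR ▸ le_self_pow₀ one_le_two (by omega)
  have hRt : #R ≤ 2 ^ t := hR ▸ Nat.pow_le_pow_right two_pos ht
  rw [hsplit, card_filter_leftHalf hA, card_filter_rightHalf hA,
    card_filter_winningHalf hT.kryptonite_mem hRA hR2 hRt hw, hA, hR]
  ring

theorem winCount_eq_kryptoniteWinCount {h : ℕ} (hR : #R = 2 ^ h) (hh : 2 ≤ h) (ht : h ≤ t)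
    (hRA : R ⊆ A) (hA : #A = 2 ^ t) : winCount T t A k = kryptoniteWinCount h t := by
  induction t, ht using Nat.le_induction generalizing A with
  | base =>
    rw [← eq_of_subset_of_card_le hRA (by rw [hA, hR]), hT.winCount_self hR hh,
      kryptoniteWinCount_self]
  | succ t ht ih =>
    rw [hT.winCount_succ hR hh ht hRA hA fun B hRB hB => ih hRB hB, kryptoniteWinCount_succ ht]

end IsSupermanKryptonite_s15

end WinCount

theorem card_filter_perm {α : Type*} [Fintype α] [DecidableEq α] (P : (α → α) → Prop)
    [DecidablePred P] :
    #{σ : Equiv.Perm α | P σ} = #{f : α → α | univ.image f = univ ∧ P f} := by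
  refine card_bij (fun σ _ => σ) (fun σ hσ => ?_)
    (fun σ₁ _ σ₂ _ h => DFunLike.coe_injective h) fun f hf => ?_
  · exact mem_filter.2 ⟨mem_univ _, image_univ_equiv σ, (mem_filter.1 hσ).2⟩
  · obtain ⟨-, himage, hP⟩ := mem_filter.1 hf
    have hsurj : Function.Surjective f := fun y => by
      have : y ∈ univ.image f := by rw [himage]; exact mem_univ y
      simpa using this
    exact ⟨Equiv.ofBijective f ⟨Finite.injective_iff_surjective.2 hsurj, hsurj⟩,
      mem_filter.2 ⟨mem_univ _, hP⟩, rfl⟩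

theorem isSupermanKryptonite_of_beats_iff {N n : ℕ} (T : Tournament N) (hn : 2 ≤ n)
    (hnN : n ≤ N)
    (hSK : ∀ i j : Fin N, i.1 < n → j.1 < n →
      (T.beats i j ↔ ((i.1 < j.1 ∧ ¬(i.1 = 0 ∧ j.1 = n - 1)) ∨ (i.1 = n - 1 ∧ j.1 = 0))))
    (hdummy : ∀ i j : Fin N, i.1 < n → n ≤ j.1 → T.beats i j) :
    IsSupermanKryptonite_s15 T {x | x.1 < n} ⟨0, by omega⟩ ⟨n - 1, by omega⟩ where
  superman_mem := mem_filter.2 ⟨mem_univ _, by dsimp only; omega⟩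
  kryptonite_mem := mem_filter.2 ⟨mem_univ _, by dsimp only; omega⟩
  superman_ne_kryptonite h := by
    have := congrArg Fin.val h
    dsimp only at this
    omega
  beats_of_mem_of_notMem x hx y hy :=
    hdummy x y (mem_filter.1 hx).2 (not_lt.1 fun h => hy (mem_filter.2 ⟨mem_univ _, h⟩))
  kryptonite_beats_superman :=
    (hSK _ _ (by dsimp only; omega) (by dsimp only; omega)).2 (Or.inr ⟨rfl, rfl⟩)
  superman_beats y hy hys hyk := by
    simp only [mem_filter, mem_univ, true_and, ne_eq, Fin.ext_iff] at hy hys hyk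
    exact (hSK _ _ (by dsimp only; omega) hy).2 (Or.inl ⟨by dsimp only; omega, by omega⟩)
  beats_kryptonite y hy hys hyk := by
    simp only [mem_filter, mem_univ, true_and, ne_eq, Fin.ext_iff] at hy hys hyk
    exact (hSK _ _ hy (by dsimp only; omega)).2 (Or.inl ⟨by dsimp only; omega, by omega⟩)

theorem factorial_two_pow_succ (t : ℕ) :
    (2 ^ (t + 1))! =
      (2 ^ (t + 1)).choose (2 ^ t) * (2 ^ t)! * (2 ^ t)! := by
  rw [pow_succ, mul_two, Nat.add_choose_mul_factorial_mul_factorial]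

/-- Let `n = 2^h` and for each `m ≥ h` let `T m` be a tournament on `2^m` agents
containing the superman-kryptonite tournament on `n` agents as a dominant
sub-tournament (the added agents lose to all of the first `n`).  Let `p m` be the
RSEB winning probability of the kryptonite (agent `n - 1`) in `T m`.  Then
`p h = 0` and for `m ≥ h + 1` the recurrence
`p m = (2/C(2^m, 2^(m-1))) ⬝ [C(2^m - n, 2^(m-1) - 1) + C(2^m - n, 2^(m-1) - n) p (m-1)]`
holds. -/
theorem stmt15 (h : ℕ) (hh : 2 ≤ h) (T : ∀ m : ℕ, Tournament (2 ^ m))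
    (hSK : ∀ m, h ≤ m → ∀ i j : Fin (2 ^ m), i.1 < 2 ^ h → j.1 < 2 ^ h →
      ((T m).beats i j ↔
        ((i.1 < j.1 ∧ ¬(i.1 = 0 ∧ j.1 = 2 ^ h - 1)) ∨ (i.1 = 2 ^ h - 1 ∧ j.1 = 0))))
    (hdummy : ∀ m, h ≤ m → ∀ i j : Fin (2 ^ m), i.1 < 2 ^ h → 2 ^ h ≤ j.1 →
      (T m).beats i j)
    (p : ℕ → ℝ)
    (hp : ∀ m (hm : h ≤ m),
      p m = ((Finset.univ.filter fun σ : Equiv.Perm (Fin (2 ^ m)) =>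
          bracketWinner (T m) m σ = ⟨2 ^ h - 1, by
            have h1 : (2:ℕ) ^ h ≤ 2 ^ m := Nat.pow_le_pow_right (by norm_num) hm
            have := Nat.two_pow_pos h; omega⟩).card : ℝ) / (2 ^ m).factorial) :
    p h = 0 ∧
      ∀ m : ℕ, h + 1 ≤ m →
        p m = (2 / ((2 ^ m).choose (2 ^ (m - 1)) : ℝ)) *
          (((2 ^ m - 2 ^ h).choose (2 ^ (m - 1) - 1) : ℝ) +
            ((2 ^ m - 2 ^ h).choose (2 ^ (m - 1) - 2 ^ h) : ℝ) * p (m - 1)) := by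
  have hp' : ∀ m, h ≤ m → p m = kryptoniteWinCount h m / (2 ^ m).factorial := by
    intro m hm
    have hnN : 2 ^ h ≤ 2 ^ m := Nat.pow_le_pow_right two_pos hm
    have h4 : 2 ≤ 2 ^ h := le_self_pow₀ one_le_two (by omega)
    have hT := isSupermanKryptonite_of_beats_iff (T m) h4 hnN (hSK m hm) (hdummy m hm)
    have hR : #{x : Fin (2 ^ m) | x.1 < 2 ^ h} = 2 ^ h := by
      simpa [Fin.card_filter_val_lt] using hnN
    rw [hp m hm, card_filter_perm (fun f => bracketWinner (T m) m f = _), ← winCount,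
      hT.winCount_eq_kryptoniteWinCount hR hh hm (subset_univ _) (by simp)]
  refine ⟨by rw [hp' h le_rfl, kryptoniteWinCount_self, Nat.cast_zero, zero_div],
    fun m hm => ?_⟩
  obtain ⟨t, rfl⟩ : ∃ t, m = t + 1 := ⟨m - 1, by omega⟩
  rw [Nat.add_sub_cancel, hp' _ (by omega), hp' t (by omega), kryptoniteWinCount_succ (by omega),
    factorial_two_pow_succ]
  have hchoose := (Nat.choose_pos (Nat.pow_le_pow_right two_pos t.le_succ)).ne'
  push_cast
  field_simp
end

section
/- For every power of two n = 2^h ≥ 2, there exists a positive integer ℓ such that Σ_{k=1}^{ℓ} (1 − 2^{−k})^{n−2} · 2^{−k} ≥ 1/(3n). -/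
/-! The single term `k = h` of the sum already suffices: with `n = 2 ^ h` it equals
`(1 - 1/n) ^ (n - 2) / n`, and `(1 - 1/n) ^ (n - 1) = ((1 + 1/(n-1)) ^ (n - 1))⁻¹ ≥ e⁻¹ > 1/3`. -/

open Real Finset

lemma exp_neg_one_le_one_sub_inv_pow_pred (m : ℕ) :
    exp (-1) ≤ (1 - (m : ℝ)⁻¹) ^ (m - 1) := by
  rcases m with _ | _ | k
  · simp
  · simp
  have hbase : 1 - ((k + 2 : ℕ) : ℝ)⁻¹ = (1 + ((k + 1 : ℕ) : ℝ)⁻¹)⁻¹ := by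
    push_cast
    field_simp
    ring
  rw [hbase, Nat.add_sub_cancel, inv_pow, exp_neg]
  exact inv_anti₀ (by positivity) one_add_inv_pow_le_exp

lemma one_div_three_le_one_sub_inv_pow_sub_two (m : ℕ) :
    1 / 3 ≤ (1 - (m : ℝ)⁻¹) ^ (m - 2) := by
  have hinv_nonneg : 0 ≤ (m : ℝ)⁻¹ := by positivity
  have hinv_le_one : (m : ℝ)⁻¹ ≤ 1 := by
    rcases m with _ | k
    · simp
    · exact inv_le_one_of_one_le₀ (by simp)
  calc (1 / 3 : ℝ) ≤ exp (-1) := by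
        rw [exp_neg, one_div]
        exact inv_anti₀ (exp_pos 1) exp_one_lt_three.le
    _ ≤ (1 - (m : ℝ)⁻¹) ^ (m - 1) := exp_neg_one_le_one_sub_inv_pow_pred m
    _ ≤ (1 - (m : ℝ)⁻¹) ^ (m - 2) :=
        pow_le_pow_of_le_one (by linarith) (by linarith) (by omega)

/-- For every power of two `n = 2^h ≥ 2` there is a positive integer `ℓ` with
`∑_{k=1}^{ℓ} (1 - 2^(-k))^(n-2) ⬝ 2^(-k) ≥ 1/(3n)`. -/
theorem stmt18 (h : ℕ) (hh : 1 ≤ h) :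
    ∃ ℓ : ℕ, 1 ≤ ℓ ∧
      1 / (3 * (2 : ℝ) ^ h) ≤
        ∑ k ∈ Finset.Icc 1 ℓ, (1 - ((2 : ℝ) ^ k)⁻¹) ^ (2 ^ h - 2) * ((2 : ℝ) ^ k)⁻¹ := by
  refine ⟨h, hh, ?_⟩
  have hterm_nonneg (k : ℕ) : 0 ≤ (1 - ((2 : ℝ) ^ k)⁻¹) ^ (2 ^ h - 2) * ((2 : ℝ) ^ k)⁻¹ := by
    have : ((2 : ℝ) ^ k)⁻¹ ≤ 1 := inv_le_one_of_one_le₀ (one_le_pow₀ one_le_two)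
    exact mul_nonneg (pow_nonneg (by linarith) _) (by positivity)
  have hterm : 1 / (3 * (2 : ℝ) ^ h) ≤
      (1 - ((2 : ℝ) ^ h)⁻¹) ^ (2 ^ h - 2) * ((2 : ℝ) ^ h)⁻¹ := by
    have := one_div_three_le_one_sub_inv_pow_sub_two (2 ^ h)
    push_cast at this
    rw [one_div, mul_inv, ← one_div]
    gcongr
  exact hterm.trans (single_le_sum (fun k _ ↦ hterm_nonneg k) (mem_Icc.2 ⟨hh, le_rfl⟩))
end

section
/- Fix positive integers h ≥ 1, n = 2^h, and k ≥ 1. Then lim_{m→∞} C(2^m − 2^h, 2^{m−k} − 1) / C(2^m − 1, 2^{m−k}) = (1 − 2^{−k})^{n−2} · 2^{−k}. -/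
/-!
Cancelling factorials, `C(n - a, r - 1) / C(n - 1, r) = r / (n - 1) * ∏_{i < a - 2} (n - 1 - r - i) / (n - 2 - i)`.
For `n = 2^m` and `r = 2^(m - k) = n / 2^k`, the first factor tends to `2^(-k)` and each of the
`a - 2` others to `1 - 2^(-k)` as `n → ∞`.
-/

open Filter Finset Topology

theorem cast_choose_div_choose_add_one_add_one {N s : ℕ} (hs : s ≤ N) :
    (N.choose s : ℝ) / (N + 1).choose (s + 1) = (s + 1) / (N + 1) := by
  have hpos : ((N + 1).choose (s + 1) : ℝ) ≠ 0 := by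
    exact_mod_cast (Nat.choose_pos (by omega)).ne'
  rw [div_eq_div_iff hpos (by positivity)]
  have key := Nat.add_one_mul_choose_eq N s
  rw [← Nat.cast_inj (R := ℝ)] at key
  push_cast at key
  linear_combination key

theorem cast_choose_div_choose_add_one {M s : ℕ} (hs : s ≤ M + 1) :
    (M.choose s : ℝ) / (M + 1).choose s = (M + 1 - s) / (M + 1) := by
  have hpos : ((M + 1).choose s : ℝ) ≠ 0 := by
    exact_mod_cast (Nat.choose_pos hs).ne'
  rw [div_eq_div_iff hpos (by positivity)]
  have key := Nat.choose_mul_succ_eq M s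
  rw [← Nat.cast_inj (R := ℝ)] at key
  push_cast [Nat.cast_sub hs] at key
  linear_combination key

theorem cast_choose_sub_div_choose {n r : ℕ} (j : ℕ) (hr : 1 ≤ r) (hn : r + j + 2 ≤ n) :
    ((n - (j + 2)).choose (r - 1) : ℝ) / (n - 1).choose r =
      r / (n - 1) * ∏ i ∈ range j, ((n - 1 - r - i : ℝ) / (n - 2 - i)) := by
  induction j with
  | zero =>
    obtain ⟨s, rfl⟩ : ∃ s, r = s + 1 := ⟨r - 1, by omega⟩
    obtain ⟨N, rfl⟩ : ∃ N, n = N + 2 := ⟨n - 2, by omega⟩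
    rw [show N + 2 - (0 + 2) = N by omega, show N + 2 - 1 = N + 1 by omega, Nat.add_sub_cancel,
      prod_range_zero, mul_one, cast_choose_div_choose_add_one_add_one (by omega)]
    push_cast
    ring
  | succ j ih =>
    obtain ⟨M, hM⟩ : ∃ M, n - (j + 2) = M + 1 := ⟨n - (j + 3), by omega⟩
    have hMn : (M : ℝ) + 1 = n - 2 - j := by
      have : M + 1 + (j + 2) = n := by omega
      rw [← this]; push_cast; ring
    have hpos : ((M + 1).choose (r - 1) : ℝ) ≠ 0 := by
      exact_mod_cast (Nat.choose_pos (by omega)).ne'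
    rw [show n - (j + 1 + 2) = M by omega, prod_range_succ, ← mul_assoc, ← ih (by omega), hM,
      ← div_mul_div_cancel₀ hpos, cast_choose_div_choose_add_one (by omega), hMn,
      Nat.cast_sub hr]
    push_cast
    ring

theorem tendsto_affine_div_of_tendsto_div {ι : Type*} {l : Filter ι} {u v : ι → ℝ} {c : ℝ}
    (hu : Tendsto u l atTop) (hv : Tendsto (fun x => v x / u x) l (𝓝 c)) (p q b b' : ℝ) :
    Tendsto (fun x => (p * u x + q * v x + b) / (u x + b')) l (𝓝 (p + q * c)) := by
  have hinv : Tendsto (fun x => (u x)⁻¹) l (𝓝 0) := tendsto_inv_atTop_zero.comp hu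
  have hlim : Tendsto (fun x => (p + q * (v x / u x) + b * (u x)⁻¹) / (1 + b' * (u x)⁻¹)) l
      (𝓝 ((p + q * c + b * 0) / (1 + b' * 0))) :=
    ((tendsto_const_nhds.add (hv.const_mul q)).add (hinv.const_mul b)).div
      (tendsto_const_nhds.add (hinv.const_mul b')) (by simp)
  simp only [mul_zero, add_zero, div_one] at hlim
  refine hlim.congr' ?_
  filter_upwards [hu.eventually_ne_atTop 0] with x hx
  field_simp

theorem tendsto_cast_choose_sub_div_choose {ι : Type*} {l : Filter ι} {n r : ι → ℕ} {c : ℝ}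
    (j : ℕ) (hn : Tendsto n l atTop) (hrn : Tendsto (fun x => (r x : ℝ) / n x) l (𝓝 c))
    (hle : ∀ᶠ x in l, 1 ≤ r x ∧ r x + j + 2 ≤ n x) :
    Tendsto (fun x => ((n x - (j + 2)).choose (r x - 1) : ℝ) / (n x - 1).choose (r x)) l
      (𝓝 (c * (1 - c) ^ j)) := by
  have hn' : Tendsto (fun x => (n x : ℝ)) l atTop := tendsto_natCast_atTop_atTop.comp hn
  have hfirst : Tendsto (fun x => (r x : ℝ) / (n x - 1)) l (𝓝 c) := by
    simpa [← sub_eq_add_neg] using tendsto_affine_div_of_tendsto_div hn' hrn 0 1 0 (-1)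
  have hfactor (i : ℕ) :
      Tendsto (fun x => ((n x : ℝ) - 1 - r x - i) / (n x - 2 - i)) l (𝓝 (1 - c)) := by
    convert tendsto_affine_div_of_tendsto_div hn' hrn 1 (-1) (-1 - i) (-2 - i) using 3 <;> ring
  have hprod := tendsto_finsetProd (range j) fun i _ => hfactor i
  rw [prod_const, card_range] at hprod
  refine (hfirst.mul hprod).congr' ?_
  filter_upwards [hle] with x ⟨hr_pos, hr_le⟩
  exact (cast_choose_sub_div_choose j hr_pos hr_le).symm

/-- For fixed `h ≥ 1`, `n = 2^h`, and `k ≥ 1`,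
`C(2^m - 2^h, 2^(m-k) - 1) / C(2^m - 1, 2^(m-k)) → (1 - 2^(-k))^(n-2) ⬝ 2^(-k)`
as `m → ∞`. -/
theorem stmt19 (h k : ℕ) (hh : 1 ≤ h) (hk : 1 ≤ k) :
    Filter.Tendsto
      (fun m : ℕ =>
        (((2 ^ m - 2 ^ h).choose (2 ^ (m - k) - 1) : ℕ) : ℝ) /
          (((2 ^ m - 1).choose (2 ^ (m - k)) : ℕ) : ℝ))
      Filter.atTop
      (nhds ((1 - ((2 : ℝ) ^ k)⁻¹) ^ (2 ^ h - 2) * ((2 : ℝ) ^ k)⁻¹)) := by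
  have h_two_le : 2 ≤ 2 ^ h := Nat.le_self_pow (by omega) 2
  have hn : Tendsto (fun m : ℕ => 2 ^ m) atTop atTop :=
    tendsto_pow_atTop_atTop_of_one_lt one_lt_two
  have hrn : Tendsto (fun m : ℕ => ((2 ^ (m - k) : ℕ) : ℝ) / (2 ^ m : ℕ)) atTop
      (𝓝 ((2 : ℝ) ^ k)⁻¹) := by
    refine tendsto_const_nhds.congr' ?_
    filter_upwards [eventually_ge_atTop k] with m hm
    rw [eq_div_iff (by positivity), ← Nat.sub_add_cancel hm]
    push_cast
    rw [Nat.add_sub_cancel, pow_add]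
    field_simp
  have hle : ∀ᶠ m in atTop, 1 ≤ 2 ^ (m - k) ∧ 2 ^ (m - k) + (2 ^ h - 2) + 2 ≤ 2 ^ m := by
    filter_upwards [eventually_ge_atTop (h + k)] with m hm
    have hr : 2 ^ (m - k) ≤ 2 ^ (m - 1) := Nat.pow_le_pow_right two_pos (by omega)
    have ha : 2 ^ h ≤ 2 ^ (m - 1) := Nat.pow_le_pow_right two_pos (by omega)
    have hm : 2 ^ m = 2 ^ (m - 1) + 2 ^ (m - 1) := by
      rw [← two_mul, ← pow_succ']; congr 1; omega
    exact ⟨Nat.one_le_two_pow, by omega⟩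
  rw [mul_comm]
  simpa [Nat.sub_add_cancel h_two_le] using tendsto_cast_choose_sub_div_choose _ hn hrn hle
end
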